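/- arXiv:2207.08367 — 6 statements merged into one kernel-verified Lean document; each statement's English description precedes it below -/
import Mathlib

section
/- Let m ≥ 1, let Ψ be a set of pairs of probability measures on ℝ^m, let ε > 0 and W > 0. Suppose that for every pair (μᵢ, μⱼ) ∈ Ψ there exists a coupling γ of μᵢ and μⱼ such that ‖x − y‖₁ ≤ W for γ-almost every (x, y) ∈ ℝ^m × ℝ^m (i.e., the ∞-Wasserstein distance between μᵢ and μⱼ is at most W). Then the additive-noise mechanism with noise Lapₘ(W/ε) satisfies (ε, 0)-distribution privacy with respect to Ψ: for every pair (μᵢ, μⱼ) ∈ Ψ and every measurable set S ⊆ ℝ^m, (μᵢ ∗ Lapₘ(W/ε))(S) ≤ e^ε · (μⱼ ∗ Lapₘ(W/ε))(S). -/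
/-! With noise `ν = Lapₘ(b)`, the convolution is `(μ ∗ ν)(S) = ∫ ν(S - x) dμ(x)`, so it suffices
to compare the integrands at points paired by the coupling. Coordinatewise, the triangle
inequality gives the shift bound `f(t - x) ≤ exp(‖x - y‖₁ / b) f(t - y)` for the Laplace density
`f`; hence `ν(S - x) ≤ e^ε ν(S - y)` whenever `‖x - y‖₁ ≤ W` and `b = W / ε`, and integrating
this against the coupling gives the claim. -/

open MeasureTheory ProbabilityTheory

/-- The Laplace measure on `ℝ^m` with scale `b`: `m` i.i.d. Laplace(`b`) coordinates. -/
noncomputable def lapPi (m : ℕ) (b : ℝ) : Measure (Fin m → ℝ) :=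
  MeasureTheory.volume.withDensity
    (fun x => ENNReal.ofReal (∏ k, (1 / (2 * b)) * Real.exp (-|x k| / b)))

/-- Convolution of two measures on `ℝ^m`: the law of `X + Z` with `X ∼ μ`, `Z ∼ ν` independent. -/
noncomputable def mconv {m : ℕ} (μ ν : Measure (Fin m → ℝ)) : Measure (Fin m → ℝ) :=
  (μ.prod ν).map (fun p => p.1 + p.2)

/-- The `L¹` norm on `ℝ^m`. -/
def l1norm {m : ℕ} (x : Fin m → ℝ) : ℝ := ∑ k, |x k|

/-- `γ` is a coupling of `μ` and `ν`. -/
def IsCoupling {m : ℕ} (γ : Measure ((Fin m → ℝ) × (Fin m → ℝ)))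
    (μ ν : Measure (Fin m → ℝ)) : Prop :=
  γ.map Prod.fst = μ ∧ γ.map Prod.snd = ν

open scoped ENNReal

theorem withDensity_preimage_add_left {G : Type*} [MeasurableSpace G] [AddCommGroup G]
    [MeasurableAdd G] (μ : Measure G) [μ.IsAddLeftInvariant] (f : G → ℝ≥0∞) (x : G)
    {S : Set G} (hS : MeasurableSet S) :
    μ.withDensity f ((x + ·) ⁻¹' S) = ∫⁻ t in S, f (t - x) ∂μ := by
  rw [withDensity_apply _ (measurable_const_add x hS),
    ← (measurePreserving_add_left μ x).setLIntegral_comp_preimage_emb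
      (MeasurableEquiv.addLeft x).measurableEmbedding (fun t => f (t - x)) S]
  simp

theorem mconv_apply {m : ℕ} (μ ν : Measure (Fin m → ℝ)) [SFinite ν] {S : Set (Fin m → ℝ)}
    (hS : MeasurableSet S) : mconv μ ν S = ∫⁻ x, ν ((x + ·) ⁻¹' S) ∂μ := by
  rw [mconv, Measure.map_apply measurable_add hS, Measure.prod_apply (measurable_add hS)]
  rfl

theorem measurable_measure_preimage_add_left {m : ℕ} (ν : Measure (Fin m → ℝ)) [SFinite ν]
    {S : Set (Fin m → ℝ)} (hS : MeasurableSet S) :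
    Measurable fun x => ν ((x + ·) ⁻¹' S) :=
  measurable_measure_prodMk_left (measurable_add hS)

theorem IsCoupling.lintegral_le_const_mul {m : ℕ} {γ : Measure ((Fin m → ℝ) × (Fin m → ℝ))}
    {μ ν : Measure (Fin m → ℝ)} (hγ : IsCoupling γ μ ν) {g : (Fin m → ℝ) → ℝ≥0∞}
    (hg : Measurable g) {c : ℝ≥0∞} (h : ∀ᵐ xy ∂γ, g xy.1 ≤ c * g xy.2) :
    ∫⁻ x, g x ∂μ ≤ c * ∫⁻ y, g y ∂ν := by
  obtain ⟨rfl, rfl⟩ := hγ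
  rw [lintegral_map hg measurable_fst, lintegral_map hg measurable_snd]
  exact (lintegral_mono_ae h).trans_eq (lintegral_const_mul c (hg.comp measurable_snd))

noncomputable def lapDen (m : ℕ) (b : ℝ) (x : Fin m → ℝ) : ℝ :=
  ∏ k, (1 / (2 * b)) * Real.exp (-|x k| / b)

theorem lapPi_eq_withDensity (m : ℕ) (b : ℝ) :
    lapPi m b = volume.withDensity fun x => ENNReal.ofReal (lapDen m b x) :=
  rfl

instance (m : ℕ) (b : ℝ) : SFinite (lapPi m b) := by
  rw [lapPi_eq_withDensity]; infer_instance

theorem lapDen_sub_le {m : ℕ} {b : ℝ} (hb : 0 < b) (x y t : Fin m → ℝ) :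
    lapDen m b (t - x) ≤ Real.exp (l1norm (x - y) / b) * lapDen m b (t - y) := by
  rw [lapDen, lapDen, l1norm, Finset.sum_div, Real.exp_sum, ← Finset.prod_mul_distrib]
  refine Finset.prod_le_prod (fun k _ => by positivity) fun k _ => ?_
  rw [mul_left_comm, ← Real.exp_add, ← add_div]
  have := abs_sub_le (t k) (x k) (y k)
  simp only [Pi.sub_apply]
  gcongr
  linarith

theorem lapPi_preimage_add_left_le {m : ℕ} {b : ℝ} (hb : 0 < b) {S : Set (Fin m → ℝ)}
    (hS : MeasurableSet S) (x y : Fin m → ℝ) :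
    lapPi m b ((x + ·) ⁻¹' S)
      ≤ ENNReal.ofReal (Real.exp (l1norm (x - y) / b)) * lapPi m b ((y + ·) ⁻¹' S) := by
  simp only [lapPi_eq_withDensity, withDensity_preimage_add_left _ _ _ hS]
  rw [← lintegral_const_mul' _ _ ENNReal.ofReal_ne_top]
  refine setLIntegral_mono' hS fun t _ => ?_
  rw [← ENNReal.ofReal_mul (Real.exp_nonneg _)]
  exact ENNReal.ofReal_le_ofReal (lapDen_sub_le hb x y t)

theorem wasserstein_mechanism_general
    (m : ℕ)
    (Ψ : Set (Measure (Fin m → ℝ) × Measure (Fin m → ℝ)))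
    (ε W : ℝ) (hε : 0 < ε) (hW : 0 < W)
    (hwass : ∀ p ∈ Ψ, ∃ γ : Measure ((Fin m → ℝ) × (Fin m → ℝ)),
      IsCoupling γ p.1 p.2 ∧ ∀ᵐ xy ∂γ, l1norm (xy.1 - xy.2) ≤ W) :
    ∀ p ∈ Ψ, ∀ S : Set (Fin m → ℝ), MeasurableSet S →
      mconv p.1 (lapPi m (W / ε)) S
        ≤ ENNReal.ofReal (Real.exp ε) * mconv p.2 (lapPi m (W / ε)) S := by
  intro p hp S hS
  obtain ⟨γ, hγ, hclose⟩ := hwass p hp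
  have hb : 0 < W / ε := div_pos hW hε
  rw [mconv_apply _ _ hS, mconv_apply _ _ hS]
  refine hγ.lintegral_le_const_mul (measurable_measure_preimage_add_left _ hS) ?_
  filter_upwards [hclose] with xy hxy
  refine (lapPi_preimage_add_left_le hb hS xy.1 xy.2).trans ?_
  gcongr
  rw [div_div_eq_mul_div, div_le_iff₀ hW]
  nlinarith

/-- **Wasserstein Mechanism** (Theorem 3.2): if every pair `(μᵢ, μⱼ) ∈ Ψ` is at
`∞`-Wasserstein distance (w.r.t. the `L¹` norm) at most `W`, then adding `Lapₘ(W/ε)`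
noise gives `(ε, 0)`-distribution privacy with respect to `Ψ`. -/
theorem wasserstein_mechanism
    (m : ℕ) (hm : 1 ≤ m)
    (Ψ : Set (Measure (Fin m → ℝ) × Measure (Fin m → ℝ)))
    (ε W : ℝ) (hε : 0 < ε) (hW : 0 < W)
    (hprob : ∀ p ∈ Ψ, IsProbabilityMeasure p.1 ∧ IsProbabilityMeasure p.2)
    (hwass : ∀ p ∈ Ψ, ∃ γ : Measure ((Fin m → ℝ) × (Fin m → ℝ)),
      IsCoupling γ p.1 p.2 ∧ ∀ᵐ xy ∂γ, l1norm (xy.1 - xy.2) ≤ W) :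
    ∀ p ∈ Ψ, ∀ S : Set (Fin m → ℝ), MeasurableSet S →
      mconv p.1 (lapPi m (W / ε)) S
        ≤ ENNReal.ofReal (Real.exp ε) * mconv p.2 (lapPi m (W / ε)) S :=
  wasserstein_mechanism_general m Ψ ε W hε hW hwass
end

section
/- Let m ≥ 1, let Θ be a set of probability measures on ℝ^m each having a well-defined mean vector (i.e., the identity map is Bochner integrable), let δ ∈ (0, 1], c > 0 and Δ ≥ 0, and let Ψ ⊆ Θ × Θ. Suppose that every μ ∈ Θ satisfies μ({t ∈ ℝ^m : ‖t − m_μ‖₁ ≤ c}) ≥ 1 − δ/2, where m_μ = ∫ x dμ(x), and that ‖m_{μᵢ} − m_{μⱼ}‖₁ ≤ Δ for every pair (μᵢ, μⱼ) ∈ Ψ. Then for every pair (μᵢ, μⱼ) ∈ Ψ, the measures μᵢ and μⱼ are (Δ + 2c, δ)-close. -/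
open MeasureTheory ProbabilityTheory

/-- `μ` and `ν` are `(W, δ)`-close: there are a coupling `γ` and a measurable set `R`
with `γ(R) ≥ 1 − δ` and `‖x − y‖₁ ≤ W` for all `(x, y) ∈ R`. -/
def WDClose {m : ℕ} (μ ν : Measure (Fin m → ℝ)) (W δ : ℝ) : Prop :=
  ∃ γ : Measure ((Fin m → ℝ) × (Fin m → ℝ)), IsCoupling γ μ ν ∧
    ∃ R : Set ((Fin m → ℝ) × (Fin m → ℝ)), MeasurableSet R ∧
      ENNReal.ofReal (1 - δ) ≤ γ R ∧ ∀ xy ∈ R, l1norm (xy.1 - xy.2) ≤ W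

/-- The mean vector of a measure on `ℝ^m` (Bochner integral of the identity). -/
noncomputable def meanVec {m : ℕ} (μ : Measure (Fin m → ℝ)) : Fin m → ℝ := ∫ x, x ∂μ

/-- **Functions bounded with high probability** (Proposition 3.5): if every `μ ∈ Θ`
puts mass at least `1 − δ/2` on the `L¹`-ball of radius `c` around its mean, and the
means of every pair in `Ψ ⊆ Θ × Θ` are within `L¹` distance `Δ`, then every pair in
`Ψ` is `(Δ + 2c, δ)`-close. -/
theorem bounded_whp_close
    (m : ℕ) (hm : 1 ≤ m)
    (Θ : Set (Measure (Fin m → ℝ)))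
    (δ c Δ : ℝ) (hδ : 0 < δ ∧ δ ≤ 1) (hc : 0 < c) (hΔ : 0 ≤ Δ)
    (Ψ : Set (Measure (Fin m → ℝ) × Measure (Fin m → ℝ)))
    (hΨΘ : Ψ ⊆ Θ ×ˢ Θ)
    (hprob : ∀ μ ∈ Θ, IsProbabilityMeasure μ)
    (hint : ∀ μ ∈ Θ, Integrable (fun x : Fin m → ℝ => x) μ)
    (hconc : ∀ μ ∈ Θ,
      ENNReal.ofReal (1 - δ / 2) ≤ μ {t | l1norm (t - meanVec μ) ≤ c})
    (hmeans : ∀ p ∈ Ψ, l1norm (meanVec p.1 - meanVec p.2) ≤ Δ) :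
    ∀ p ∈ Ψ, WDClose p.1 p.2 (Δ + 2 * c) δ := by

  intro p hp
  obtain ⟨hμ, hν⟩ := hΨΘ hp
  obtain ⟨μ, ν⟩ := p
  simp only at hμ hν ⊢
  haveI : IsProbabilityMeasure μ := hprob μ hμ
  haveI : IsProbabilityMeasure ν := hprob ν hν
  have hl1meas : ∀ v : Fin m → ℝ, MeasurableSet {t : Fin m → ℝ | l1norm (t - v) ≤ c} := by
    intro v
    have : Continuous fun t : Fin m → ℝ => l1norm (t - v) := by
      unfold l1norm
      exact continuous_finset_sum _ fun k _ =>
        ((continuous_apply k).sub continuous_const).abs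
    exact isClosed_le this continuous_const |>.measurableSet
  refine ⟨μ.prod ν, ⟨?_, ?_⟩, ?_⟩
  · rw [Measure.map_fst_prod]; simp
  · rw [Measure.map_snd_prod]; simp
  · refine ⟨{t | l1norm (t - meanVec μ) ≤ c} ×ˢ {t | l1norm (t - meanVec ν) ≤ c},
      (hl1meas _).prod (hl1meas _), ?_, ?_⟩
    · rw [Measure.prod_prod]
      have h2 : (0:ℝ) ≤ 1 - δ / 2 := by linarith [hδ.2]
      calc ENNReal.ofReal (1 - δ) ≤ ENNReal.ofReal ((1 - δ/2) * (1 - δ/2)) := by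
            apply ENNReal.ofReal_le_ofReal; nlinarith [hδ.1]
        _ = ENNReal.ofReal (1 - δ/2) * ENNReal.ofReal (1 - δ/2) := by
            rw [ENNReal.ofReal_mul h2]
        _ ≤ _ := mul_le_mul' (hconc μ hμ) (hconc ν hν)
    · rintro ⟨x, y⟩ ⟨hx, hy⟩
      simp only [Set.mem_setOf_eq] at hx hy
      have hmean := hmeans _ hp
      simp only at hmean
      have key : l1norm (x - y) ≤ l1norm (x - meanVec μ) + l1norm (meanVec μ - meanVec ν)
          + l1norm (y - meanVec ν) := by
        unfold l1norm
        rw [← Finset.sum_add_distrib, ← Finset.sum_add_distrib]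
        apply Finset.sum_le_sum
        intro k _
        simp only [Pi.sub_apply]
        have : x k - y k = (x k - meanVec μ k) + (meanVec μ k - meanVec ν k)
            - (y k - meanVec ν k) := by ring
        rw [this]
        calc |_| ≤ |(x k - meanVec μ k) + (meanVec μ k - meanVec ν k)| + |y k - meanVec ν k| :=
              abs_sub _ _
          _ ≤ _ := by gcongr; exact abs_add_le _ _
      linarith
end

section
/- Let m ≥ 1, let ε ∈ (0, 1], let δ ∈ (0, 1) be such that c = √(2 ln(1.25/δ)) satisfies c ≥ 3/2, and let Ψ be a set of pairs of multivariate Gaussian probability measures on ℝ^m. Suppose that every pair in Ψ has the form (N(μᵢ, Σ), N(μⱼ, Σ)) for some mean vectors μᵢ, μⱼ ∈ ℝ^m and a common symmetric positive definite covariance matrix Σ satisfying the Mahalanobis condition (μᵢ − μⱼ)ᵀ Σ⁻¹ (μᵢ − μⱼ) ≤ (ε/c)². Then releasing the query without noise satisfies (ε, δ)-distribution privacy with respect to Ψ: for every such pair and every measurable S ⊆ ℝ^m, N(μᵢ, Σ)(S) ≤ e^ε · N(μⱼ, Σ)(S) + δ. -/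
open MeasureTheory ProbabilityTheory

/-- The Euclidean (`L²`) norm on `ℝ^m`. -/
noncomputable def l2norm {m : ℕ} (x : Fin m → ℝ) : ℝ := Real.sqrt (∑ k, (x k) ^ 2)

/-- The standard Gaussian measure on `ℝ^m`: `m` i.i.d. standard normal coordinates. -/
noncomputable def stdGaussPi (m : ℕ) : Measure (Fin m → ℝ) :=
  Measure.pi fun _ : Fin m => gaussianReal 0 1

/-- The multivariate Gaussian measure `N(μ, A Aᵀ)` on `ℝ^m`, defined as the law of
`μ + A·G` where `G` is a standard Gaussian vector. -/
noncomputable def gaussN {m : ℕ} (μ : Fin m → ℝ) (A : Matrix (Fin m) (Fin m) ℝ) :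
    Measure (Fin m → ℝ) :=
  (stdGaussPi m).map (fun g => μ + A.mulVec g)

/-!
Write `N(μ, AAᵀ)` as the image of the standard Gaussian `γ` under `g ↦ μ + A g`. Then the pair
`(N(μᵢ, Σ), N(μⱼ, Σ))` is the image of `(γ(· - w), γ)` under one map, where `w = A⁻¹(μᵢ - μⱼ)`
and `|w|²` is the Mahalanobis distance. The shifted Gaussian has density
`exp(⟪x, w⟫ - |w|²/2)` with respect to `γ`. Where this density is at most `e^ε` we get the
`e^ε γ(T)` term. The rest has mass `P(N(0, |w|²) > ε - |w|²/2) ≤ exp(-(ε - |w|²/2)² / 2|w|²) / 2`,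
and `|w| ≤ ε / c` makes this at most `1.25 e^{-c²/2} = δ`.
-/

open scoped ENNReal NNReal Matrix

lemma MeasureTheory.Measure.pi_eq_withDensity_prod {ι : Type*} [Fintype ι] {α : ι → Type*}
    [∀ i, MeasurableSpace (α i)] (μ ν : ∀ i, Measure (α i)) [∀ i, IsProbabilityMeasure (μ i)]
    [∀ i, SigmaFinite (ν i)] (f : ∀ i, α i → ℝ≥0∞) (hf : ∀ i, Measurable (f i))
    (hν : ∀ i, ν i = (μ i).withDensity (f i)) :
    Measure.pi ν = (Measure.pi μ).withDensity (fun x => ∏ i, f i (x i)) := by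
  refine Measure.pi_eq fun s hs => ?_
  have h_indicator : (Set.univ.pi s).indicator (fun x => ∏ i, f i (x i)) =
      fun x => ∏ i, (s i).indicator (f i) (x i) := by
    classical
    ext x
    simp [Set.indicator_apply, Finset.prod_ite_zero]
  rw [withDensity_apply _ (.univ_pi hs), ← lintegral_indicator (.univ_pi hs), h_indicator,
    lintegral_prod_eq_prod_lintegral_of_indepFun _ _
      (iIndepFun_pi fun i => ((hf i).indicator (hs i)).aemeasurable)
      fun i => ((hf i).indicator (hs i)).comp (measurable_pi_apply i)]
  refine Finset.prod_congr rfl fun i _ => ?_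
  rw [hν, withDensity_apply _ (hs i), ← lintegral_indicator (hs i),
    ← lintegral_map ((hf i).indicator (hs i)) (measurable_pi_apply i),
    (measurePreserving_eval μ i).map_eq]

lemma MeasureTheory.withDensity_apply_le_mul_add {α : Type*} [MeasurableSpace α] (μ : Measure α)
    {f : α → ℝ≥0∞} (hf : Measurable f) (a : ℝ≥0∞) {T : Set α} (hT : MeasurableSet T) :
    μ.withDensity f T ≤ a * μ T + μ.withDensity f {x | a < f x} := by
  have h_small : MeasurableSet {x | f x ≤ a} := measurableSet_le hf measurable_const
  calc μ.withDensity f T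
      ≤ μ.withDensity f (T ∩ {x | f x ≤ a}) + μ.withDensity f (T \ {x | f x ≤ a}) :=
        measure_le_inter_add_sdiff _ _ _
    _ ≤ a * μ T + μ.withDensity f {x | a < f x} := by
        gcongr
        · rw [withDensity_apply _ (hT.inter h_small)]
          calc ∫⁻ x in T ∩ {x | f x ≤ a}, f x ∂μ ≤ ∫⁻ _ in T ∩ {x | f x ≤ a}, a ∂μ :=
                setLIntegral_mono measurable_const fun x hx => hx.2
            _ = a * μ (T ∩ {x | f x ≤ a}) := setLIntegral_const _ _
            _ ≤ a * μ T := by gcongr; exact Set.inter_subset_left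
        · exact fun x hx => show a < f x from not_le.1 hx.2

theorem Matrix.mulVec_dotProduct_inv_mul_transpose_mulVec {n R : Type*} [Fintype n]
    [DecidableEq n] [CommRing R] {A : Matrix n n R} (hA : IsUnit A.det) (w : n → R) :
    (A *ᵥ w) ⬝ᵥ ((A * Aᵀ)⁻¹ *ᵥ (A *ᵥ w)) = w ⬝ᵥ w := by
  rw [Matrix.mul_inv_rev, ← Matrix.transpose_nonsing_inv, Matrix.mulVec_mulVec, Matrix.mul_assoc,
    Matrix.nonsing_inv_mul _ hA, Matrix.mul_one, Matrix.dotProduct_mulVec, Matrix.vecMul_transpose,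
    Matrix.mulVec_mulVec, Matrix.nonsing_inv_mul _ hA, Matrix.one_mulVec]

lemma gaussianReal_withDensity_exp (a u : ℝ) {v : ℝ≥0} (hv : v ≠ 0) :
    (gaussianReal a v).withDensity
      (fun y => ENNReal.ofReal (Real.exp (((y - a) * u - u ^ 2 / 2) / v))) =
      gaussianReal (a + u) v := by
  rw [gaussianReal_of_var_ne_zero a hv, gaussianReal_of_var_ne_zero (a + u) hv,
    ← withDensity_mul _ (measurable_gaussianPDF a v) (by fun_prop)]
  congr 1
  ext y
  rw [Pi.mul_apply, gaussianPDF, gaussianPDF, ← ENNReal.ofReal_mul (gaussianPDFReal_nonneg a v y)]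
  simp only [gaussianPDFReal, mul_assoc, ← Real.exp_add]
  congr 3
  field_simp
  ring

lemma gaussianReal_Ioi_zero_le_half (v : ℝ≥0) : gaussianReal 0 v (Set.Ioi 0) ≤ 2⁻¹ := by
  have h_symm : gaussianReal 0 v (Set.Iio 0) = gaussianReal 0 v (Set.Ioi 0) := by
    conv_lhs => rw [← neg_zero, ← gaussianReal_map_neg]
    rw [Measure.map_apply measurable_neg measurableSet_Iio]
    congr 1
    ext x
    simp
  have h_sum : gaussianReal 0 v (Set.Ioi 0) + gaussianReal 0 v (Set.Iio 0) ≤ 1 :=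
    (measure_union Set.Ioi_disjoint_Iio_same measurableSet_Iio).symm.trans_le prob_le_one
  rw [h_symm, ← two_mul] at h_sum
  rwa [ENNReal.le_inv_iff_mul_le, mul_comm]

lemma gaussianReal_Ioi_le (v : ℝ≥0) {t : ℝ} (ht : 0 ≤ t) :
    gaussianReal 0 v (Set.Ioi t) ≤ ENNReal.ofReal (Real.exp (-t ^ 2 / (2 * v)) / 2) := by
  rcases eq_or_ne v 0 with rfl | hv
  · simp [gaussianReal_zero_var, Measure.dirac_apply' _ measurableSet_Ioi, not_lt.2 ht]
  -- tilt `N(t, v)` back to `N(0, v)`: on `(t, ∞)` the density is at most `exp(-t²/2v)`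
  have h_tilt := gaussianReal_withDensity_exp t (-t) hv
  rw [add_neg_cancel] at h_tilt
  have h_half : gaussianReal t v (Set.Ioi t) ≤ 2⁻¹ := by
    rw [← zero_add t, ← gaussianReal_map_add_const,
      Measure.map_apply (measurable_add_const _) measurableSet_Ioi]
    convert gaussianReal_Ioi_zero_le_half v using 2
    ext x
    simp
  rw [← h_tilt, withDensity_apply _ measurableSet_Ioi]
  calc ∫⁻ y in Set.Ioi t, ENNReal.ofReal (Real.exp (((y - t) * -t - (-t) ^ 2 / 2) / v))
        ∂gaussianReal t v
      ≤ ∫⁻ _ in Set.Ioi t, ENNReal.ofReal (Real.exp (-t ^ 2 / (2 * v))) ∂gaussianReal t v := by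
        refine setLIntegral_mono measurable_const fun y (hy : t < y) => ?_
        have hv_pos : (0 : ℝ) < v := by positivity
        gcongr ENNReal.ofReal (Real.exp ?_)
        rw [div_le_div_iff₀ hv_pos (by positivity)]
        nlinarith [mul_nonneg (sub_nonneg.2 hy.le) ht]
    _ = ENNReal.ofReal (Real.exp (-t ^ 2 / (2 * v))) * gaussianReal t v (Set.Ioi t) :=
        setLIntegral_const _ _
    _ ≤ ENNReal.ofReal (Real.exp (-t ^ 2 / (2 * v))) * 2⁻¹ := by gcongr
    _ = ENNReal.ofReal (Real.exp (-t ^ 2 / (2 * v)) / 2) := by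
        rw [ENNReal.ofReal_div_of_pos two_pos, ENNReal.ofReal_ofNat]
        rfl

instance isProbabilityMeasure_stdGaussPi (m : ℕ) : IsProbabilityMeasure (stdGaussPi m) := by
  unfold stdGaussPi; infer_instance

lemma stdGaussPi_map_dotProduct {m : ℕ} (w : Fin m → ℝ) :
    (stdGaussPi m).map (· ⬝ᵥ w) = gaussianReal 0 (w ⬝ᵥ w).toNNReal := by
  let L : StrongDual ℝ (EuclideanSpace ℝ (Fin m)) := innerSL ℝ (WithLp.toLp 2 w)
  have hL : (· ⬝ᵥ w) = L ∘ WithLp.toLp 2 := rfl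
  rw [hL, ← Measure.map_map L.continuous.measurable (by fun_prop), stdGaussPi,
    map_pi_eq_stdGaussian, IsGaussian.map_eq_gaussianReal, integral_strongDual_stdGaussian,
    variance_dual_stdGaussian, innerSL_apply_norm, EuclideanSpace.real_norm_sq_eq]
  simp [dotProduct, sq]

lemma stdGaussPi_map_add {m : ℕ} (w : Fin m → ℝ) :
    (stdGaussPi m).map (· + w) =
      (stdGaussPi m).withDensity (fun x => ENNReal.ofReal (Real.exp (x ⬝ᵥ w - w ⬝ᵥ w / 2))) := by
  have h_shift : ∀ k, MeasurePreserving (· + w k) (gaussianReal 0 1) (gaussianReal (w k) 1) :=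
    fun k => ⟨measurable_add_const _, by rw [gaussianReal_map_add_const, zero_add]⟩
  have h_density : ∀ k, gaussianReal (w k) 1 = (gaussianReal 0 1).withDensity
      (fun y => ENNReal.ofReal (Real.exp (((y - 0) * w k - w k ^ 2 / 2) / (1 : ℝ≥0)))) := by
    intro k
    rw [gaussianReal_withDensity_exp 0 (w k) one_ne_zero, zero_add]
  have h_prod : ∀ x : Fin m → ℝ,
      ∏ k, ENNReal.ofReal (Real.exp (((x k - 0) * w k - w k ^ 2 / 2) / (1 : ℝ≥0))) =
        ENNReal.ofReal (Real.exp (x ⬝ᵥ w - w ⬝ᵥ w / 2)) := by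
    intro x
    rw [← ENNReal.ofReal_prod_of_nonneg fun k _ => (Real.exp_pos _).le, ← Real.exp_sum]
    simp [dotProduct, Finset.sum_div, sq]
  refine (measurePreserving_pi _ _ h_shift).map_eq.trans ?_
  rw [Measure.pi_eq_withDensity_prod _ _ _ (fun k => by fun_prop) h_density]
  simp_rw [h_prod]
  rfl

lemma stdGaussPi_map_add_apply_le {m : ℕ} (w : Fin m → ℝ) (ε : ℝ) {T : Set (Fin m → ℝ)}
    (hT : MeasurableSet T) :
    (stdGaussPi m).map (· + w) T ≤ ENNReal.ofReal (Real.exp ε) * stdGaussPi m T +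
      gaussianReal 0 (w ⬝ᵥ w).toNNReal (Set.Ioi (ε - w ⬝ᵥ w / 2)) := by
  have h_dot : Measurable (· ⬝ᵥ w : (Fin m → ℝ) → ℝ) := by fun_prop
  have h_loss :
      {x | ENNReal.ofReal (Real.exp ε) < ENNReal.ofReal (Real.exp (x ⬝ᵥ w - w ⬝ᵥ w / 2))} =
        (· ⬝ᵥ w) ⁻¹' Set.Ioi (ε + w ⬝ᵥ w / 2) := by
    ext x
    simp [ENNReal.ofReal_lt_ofReal_iff (Real.exp_pos _)]
    constructor <;> intro h <;> linarith
  have h_shifted_loss : (· + w) ⁻¹' ((· ⬝ᵥ w) ⁻¹' Set.Ioi (ε + w ⬝ᵥ w / 2)) =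
      (· ⬝ᵥ w) ⁻¹' Set.Ioi (ε - w ⬝ᵥ w / 2) := by
    ext x
    simp [add_dotProduct]
    constructor <;> intro h <;> linarith
  rw [stdGaussPi_map_add]
  refine (withDensity_apply_le_mul_add _ (by fun_prop) (ENNReal.ofReal (Real.exp ε)) hT).trans_eq ?_
  rw [h_loss, ← stdGaussPi_map_add, Measure.map_apply (by fun_prop) (h_dot measurableSet_Ioi),
    h_shifted_loss, ← Measure.map_apply h_dot measurableSet_Ioi, stdGaussPi_map_dotProduct]

lemma gaussN_add_mulVec {m : ℕ} (μ w : Fin m → ℝ) (A : Matrix (Fin m) (Fin m) ℝ) :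
    gaussN (μ + A *ᵥ w) A = ((stdGaussPi m).map (· + w)).map (fun g => μ + A *ᵥ g) := by
  rw [gaussN, Measure.map_map (by fun_prop) (by fun_prop)]
  congr 1
  ext g : 1
  simp only [Function.comp_apply, Matrix.mulVec_add]
  abel

lemma eq_mul_exp_of_eq_sqrt_log {δ c : ℝ} (hδ : 0 < δ) (hc : c = √(2 * Real.log (1.25 / δ)))
    (hc0 : 0 < c) : δ = 1.25 * Real.exp (-c ^ 2 / 2) := by
  have h_log : Real.log (1.25 / δ) = c ^ 2 / 2 := by
    rw [hc, Real.sq_sqrt]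
    · ring
    · by_contra h
      rw [hc, Real.sqrt_eq_zero_of_nonpos (not_le.1 h).le] at hc0
      exact hc0.false
  rw [neg_div, Real.exp_neg, ← h_log, Real.exp_log (div_pos (by norm_num) hδ)]
  field_simp

lemma sub_half_nonneg_and_mul_le_sq {ε c v : ℝ} (hε : 0 < ε) (hε1 : ε ≤ 1) (hc : 1 ≤ c) (hv : 0 < v)
    (hvε : v ≤ (ε / c) ^ 2) : 0 ≤ ε - v / 2 ∧ (c ^ 2 - 1) * v ≤ (ε - v / 2) ^ 2 := by
  obtain ⟨s, hs, rfl⟩ : ∃ s, 0 < s ∧ s ^ 2 = v := ⟨√v, Real.sqrt_pos.2 hv, Real.sq_sqrt hv.le⟩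
  have hcs : c * s ≤ ε := by
    have := (pow_le_pow_iff_left₀ hs.le (by positivity) two_ne_zero).1 hvε
    rwa [le_div_iff₀ (by positivity), mul_comm] at this
  have h_base : 0 ≤ c * s - s ^ 2 / 2 := by nlinarith
  refine ⟨by linarith, ?_⟩
  calc (c ^ 2 - 1) * s ^ 2 ≤ (c * s - s ^ 2 / 2) ^ 2 := by nlinarith [sq_nonneg s]
    _ ≤ (ε - s ^ 2 / 2) ^ 2 := by gcongr

lemma gaussianReal_Ioi_sub_half_le {ε c v : ℝ} (hε : 0 < ε) (hε1 : ε ≤ 1) (hc : 1 ≤ c)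
    (hvε : v ≤ (ε / c) ^ 2) :
    gaussianReal 0 v.toNNReal (Set.Ioi (ε - v / 2)) ≤
      ENNReal.ofReal (1.25 * Real.exp (-c ^ 2 / 2)) := by
  rcases le_or_gt v 0 with hv | hv
  · rw [Real.toNNReal_of_nonpos hv, gaussianReal_zero_var, Measure.dirac_apply' _ measurableSet_Ioi,
      Set.indicator_of_notMem (by simp; linarith)]
    exact bot_le
  obtain ⟨h_pos, h_sq⟩ := sub_half_nonneg_and_mul_le_sq hε hε1 hc hv hvε
  have h_exp_half : Real.exp (1 / 2) ≤ 5 / 2 := by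
    have h_sq_exp : Real.exp (1 / 2) ^ 2 = Real.exp 1 := by rw [← Real.exp_nat_mul]; norm_num
    nlinarith [Real.exp_one_lt_d9, Real.exp_pos (1 / 2)]
  refine (gaussianReal_Ioi_le _ h_pos).trans (ENNReal.ofReal_le_ofReal ?_)
  rw [Real.coe_toNNReal _ hv.le]
  calc Real.exp (-(ε - v / 2) ^ 2 / (2 * v)) / 2 ≤ Real.exp (-(c ^ 2 - 1) / 2) / 2 := by
        gcongr Real.exp ?_ / _
        rw [div_le_div_iff₀ (by positivity) two_pos]
        nlinarith
    _ = Real.exp (-c ^ 2 / 2) * Real.exp (1 / 2) / 2 := by rw [← Real.exp_add]; ring_nf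
    _ ≤ 1.25 * Real.exp (-c ^ 2 / 2) := by nlinarith [Real.exp_pos (-c ^ 2 / 2)]

theorem gaussian_no_noise_release_general
    (m : ℕ)
    (ε δ c : ℝ) (hε : 0 < ε ∧ ε ≤ 1) (hδ : 0 < δ ∧ δ < 1)
    (hc : c = Real.sqrt (2 * Real.log (1.25 / δ))) (hc32 : 3 / 2 ≤ c)
    (Ψ : Set (Measure (Fin m → ℝ) × Measure (Fin m → ℝ)))
    (hΨ : ∀ p ∈ Ψ, ∃ (μi μj : Fin m → ℝ) (Sig A : Matrix (Fin m) (Fin m) ℝ),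
      Sig.PosDef ∧ A * A.transpose = Sig ∧
      dotProduct (μi - μj) (Sig⁻¹.mulVec (μi - μj)) ≤ (ε / c) ^ 2 ∧
      p.1 = gaussN μi A ∧ p.2 = gaussN μj A) :
    ∀ p ∈ Ψ, ∀ S : Set (Fin m → ℝ), MeasurableSet S →
      p.1 S ≤ ENNReal.ofReal (Real.exp ε) * p.2 S + ENNReal.ofReal δ := by
  intro p hp S hS
  obtain ⟨μi, μj, Sig, A, hSig, rfl, h_maha, hp1, hp2⟩ := hΨ p hp
  have hA : IsUnit A.det := by
    have h_det := hSig.det_pos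
    rw [Matrix.det_mul, Matrix.det_transpose] at h_det
    exact isUnit_iff_ne_zero.2 fun h => by simp [h] at h_det
  set w := A⁻¹ *ᵥ (μi - μj)
  have h_diff : μi - μj = A *ᵥ w := by
    rw [Matrix.mulVec_mulVec, Matrix.mul_nonsing_inv _ hA, Matrix.one_mulVec]
  have hw : w ⬝ᵥ w ≤ (ε / c) ^ 2 := by
    rwa [h_diff, Matrix.mulVec_dotProduct_inv_mul_transpose_mulVec hA] at h_maha
  have h_affine : Measurable (fun g => μj + A *ᵥ g) := by fun_prop
  rw [hp1, hp2, eq_add_of_sub_eq' h_diff, gaussN_add_mulVec, gaussN,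
    Measure.map_apply h_affine hS, Measure.map_apply h_affine hS,
    eq_mul_exp_of_eq_sqrt_log hδ.1 hc (by linarith)]
  calc _ ≤ _ := stdGaussPi_map_add_apply_le w ε (h_affine hS)
    _ ≤ _ := by gcongr; exact gaussianReal_Ioi_sub_half_le hε.1 hε.2 (by linarith) hw

/-- **Release without noise under adversarial uncertainty** (Theorem 4.4): if every
pair in `Ψ` is of the form `(N(μᵢ, Σ), N(μⱼ, Σ))` with common positive definite
covariance `Σ` and `(μᵢ − μⱼ)ᵀ Σ⁻¹ (μᵢ − μⱼ) ≤ (ε/c)²`, where `c = √(2 ln(1.25/δ))`,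
then the identity mechanism satisfies `(ε, δ)`-distribution privacy w.r.t. `Ψ`. -/
theorem gaussian_no_noise_release
    (m : ℕ) (hm : 1 ≤ m)
    (ε δ c : ℝ) (hε : 0 < ε ∧ ε ≤ 1) (hδ : 0 < δ ∧ δ < 1)
    (hc : c = Real.sqrt (2 * Real.log (1.25 / δ))) (hc32 : 3 / 2 ≤ c)
    (Ψ : Set (Measure (Fin m → ℝ) × Measure (Fin m → ℝ)))
    (hΨ : ∀ p ∈ Ψ, ∃ (μi μj : Fin m → ℝ) (Sig A : Matrix (Fin m) (Fin m) ℝ),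
      Sig.PosDef ∧ A * A.transpose = Sig ∧
      dotProduct (μi - μj) (Sig⁻¹.mulVec (μi - μj)) ≤ (ε / c) ^ 2 ∧
      p.1 = gaussN μi A ∧ p.2 = gaussN μj A) :
    ∀ p ∈ Ψ, ∀ S : Set (Fin m → ℝ), MeasurableSet S →
      p.1 S ≤ ENNReal.ofReal (Real.exp ε) * p.2 S + ENNReal.ofReal δ :=
  gaussian_no_noise_release_general m ε δ c hε hδ hc hc32 Ψ hΨ
end

section
/- Let m ≥ 1, let ε ∈ (0, 1], let δ ∈ (0, 1) be such that c = √(2 ln(1.25/δ)) satisfies c ≥ 3/2, and let Ψ be a set of pairs of multivariate Gaussian probability measures on ℝ^m of the form (N(μᵢ, Σ₀), N(μⱼ, Σ₀)) with a common symmetric positive definite covariance matrix Σ₀ for each pair. Let Σ be a symmetric positive semidefinite matrix and let ζ = N(0, Σ) be the law of a centered Gaussian vector with covariance Σ (defined as the law of A·G for any matrix A with AAᵀ = Σ and G a standard Gaussian vector). Suppose that for every pair in Ψ, (μᵢ − μⱼ)ᵀ (Σ₀ + Σ)⁻¹ (μᵢ − μⱼ) ≤ (ε/c)². Then the additive-noise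 mechanism with noise ζ satisfies (ε, δ)-distribution privacy with respect to Ψ: for every pair in Ψ and every measurable S ⊆ ℝ^m, (N(μᵢ, Σ₀) ∗ ζ)(S) ≤ e^ε · (N(μⱼ, Σ₀) ∗ ζ)(S) + δ. -/
/-!
Both outputs are images of one standard Gaussian vector `G` on `ℝ^(2m)`: with `C = [A | B]`,
`N(μ, Σ₀) ∗ N(0, Σ)` is the law of `μ + C G`, and `C Cᵀ = Σ₀ + Σ`. Writing
`μᵢ - μⱼ = C w` with the minimal-norm solution `w = Cᵀ (C Cᵀ)⁻¹ (μᵢ - μⱼ)`, whose squared norm is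
the Mahalanobis distance in the hypothesis, the pair becomes the post-processing under
`x ↦ μⱼ + C x` of the pair (`G + w`, `G`). For the latter, the Cameron–Martin density
`exp (⟪w, x⟫ - ‖w‖² / 2)` is at most `exp ε` off a half-space of Gaussian mass at most
`exp (-t² / (2 ‖w‖²)) / 2` with `t = ε - ‖w‖² / 2`, and the choice of `c` makes this at most `δ`.
-/

open MeasureTheory ProbabilityTheory

open Real Matrix
open scoped ENNReal

def DistribPrivate {α : Type*} [MeasurableSpace α] (ε : ℝ) (δ : ℝ≥0∞) (ν₁ ν₂ : Measure α) :
    Prop :=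
  ∀ S, MeasurableSet S → ν₁ S ≤ ENNReal.ofReal (exp ε) * ν₂ S + δ

namespace DistribPrivate

variable {α β : Type*} [MeasurableSpace α] [MeasurableSpace β] {ε : ℝ} {δ δ' : ℝ≥0∞}
  {ν₁ ν₂ : Measure α}

lemma refl (hε : 0 ≤ ε) : DistribPrivate ε δ ν₁ ν₁ := fun S _ =>
  calc ν₁ S = 1 * ν₁ S := (one_mul _).symm
    _ ≤ ENNReal.ofReal (exp ε) * ν₁ S := by
      gcongr
      exact ENNReal.one_le_ofReal.mpr (one_le_exp hε)
    _ ≤ ENNReal.ofReal (exp ε) * ν₁ S + δ := le_self_add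

lemma mono_delta (h : DistribPrivate ε δ ν₁ ν₂) (hδ : δ ≤ δ') : DistribPrivate ε δ' ν₁ ν₂ :=
  fun S hS => (h S hS).trans (by gcongr)

lemma map (h : DistribPrivate ε δ ν₁ ν₂) {f : α → β} (hf : Measurable f) :
    DistribPrivate ε δ (ν₁.map f) (ν₂.map f) := fun S hS => by
  simpa only [Measure.map_apply hf hS] using h _ (hf hS)

end DistribPrivate

lemma MeasureTheory.withDensity_apply_le_mul_add_s7 {α : Type*} [MeasurableSpace α]
    {μ : Measure α} [SFinite μ] {ρ : α → ℝ≥0∞} {K : ℝ≥0∞} {G : Set α} (hρ : ∀ x ∈ G, ρ x ≤ K)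
    (E : Set α) :
    μ.withDensity ρ E ≤ K * μ E + μ.withDensity ρ Gᶜ :=
  calc μ.withDensity ρ E ≤ μ.withDensity ρ (E ∩ G) + μ.withDensity ρ (E \ G) :=
        measure_le_inter_add_sdiff _ _ _
    _ ≤ K * μ E + μ.withDensity ρ Gᶜ := by
        gcongr
        · calc μ.withDensity ρ (E ∩ G) = ∫⁻ x in E ∩ G, ρ x ∂μ := withDensity_apply' _ _
            _ ≤ ∫⁻ _ in E ∩ G, K ∂μ := setLIntegral_mono measurable_const fun x hx => hρ x hx.2
            _ ≤ K * μ E := by rw [setLIntegral_const]; gcongr; exact Set.inter_subset_left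
        · exact Set.sdiff_subset_compl _ _

lemma ProbabilityTheory.gaussianReal_one_eq_withDensity (a : ℝ) :
    gaussianReal a 1
      = (gaussianReal 0 1).withDensity fun x => ENNReal.ofReal (exp (a * x - a ^ 2 / 2)) := by
  rw [gaussianReal_of_var_ne_zero a one_ne_zero, gaussianReal_of_var_ne_zero 0 one_ne_zero,
    ← withDensity_mul _ (measurable_gaussianPDF 0 1) (by fun_prop)]
  congr 1
  funext x
  rw [Pi.mul_apply, gaussianPDF, gaussianPDF, ← ENNReal.ofReal_mul (gaussianPDFReal_nonneg 0 1 x)]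
  simp only [gaussianPDFReal, mul_assoc, ← exp_add]
  congr 3
  push_cast
  ring

lemma MeasureTheory.Measure.pi_withDensity_ofReal {ι : Type*} [Fintype ι] {α : ι → Type*}
    [∀ i, MeasurableSpace (α i)] {μ : ∀ i, Measure (α i)} [∀ i, IsProbabilityMeasure (μ i)]
    {f : ∀ i, α i → ℝ} (hf : ∀ i, Measurable (f i)) :
    Measure.pi (fun i => (μ i).withDensity fun x => ENNReal.ofReal (f i x))
      = (Measure.pi μ).withDensity fun x => ∏ i, ENNReal.ofReal (f i (x i)) := by
  refine Measure.pi_eq fun s hs => ?_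
  have hbox : (Set.univ.pi s).indicator (fun x => ∏ i, ENNReal.ofReal (f i (x i)))
      = fun x => ∏ i, (s i).indicator (fun y => ENNReal.ofReal (f i y)) (x i) := by
    funext x
    classical
    simp [Set.indicator_apply, Finset.prod_ite_zero]
  rw [withDensity_apply _ (MeasurableSet.univ_pi hs),
    ← lintegral_indicator (MeasurableSet.univ_pi hs), hbox,
    lintegral_prod_eq_prod_lintegral_of_indepFun _ _ (iIndepFun_pi fun i => ?_) fun i => ?_]
  · refine Finset.prod_congr rfl fun i _ => ?_
    rw [withDensity_apply _ (hs i), ← lintegral_indicator (hs i)]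
    exact (measurePreserving_eval μ i).lintegral_comp (((hf i).ennreal_ofReal).indicator (hs i))
  · exact (((hf i).ennreal_ofReal).indicator (hs i)).aemeasurable
  · exact (((hf i).ennreal_ofReal).indicator (hs i)).comp (measurable_pi_apply i)

lemma gaussian_noise_calibration {ε δ c s : ℝ} (hε₀ : 0 < ε) (hε₁ : ε ≤ 1) (hδ : 0 < δ)
    (hc : c = √(2 * log (1.25 / δ))) (hc32 : 3 / 2 ≤ c) (hs : 0 < s) (hsc : s ≤ (ε / c) ^ 2) :
    0 ≤ ε - s / 2 ∧ exp (-(ε - s / 2) ^ 2 / (2 * s)) / 2 ≤ δ := by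
  have hc0 : 0 < c := by linarith
  have hsc' : s * c ^ 2 ≤ ε ^ 2 := by rwa [div_pow, le_div_iff₀ (by positivity)] at hsc
  have hc2 : c ^ 2 = 2 * log (1.25 / δ) := by
    rw [hc, sq_sqrt (Real.sqrt_pos.mp (hc ▸ hc0)).le]
  have ht : 0 ≤ ε - s / 2 := by
    nlinarith [mul_le_mul_of_nonneg_left (show 9 / 4 ≤ c ^ 2 by nlinarith) hs.le,
      mul_le_mul_of_nonneg_left hε₁ hε₀.le]
  refine ⟨ht, ?_⟩
  have hmargin : (c ^ 2 - 1) / 2 ≤ (ε - s / 2) ^ 2 / (2 * s) := by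
    rw [div_le_div_iff₀ two_pos (by positivity)]
    nlinarith [mul_le_mul_of_nonneg_left hε₁ hs.le]
  have hexp : exp (-(c ^ 2 - 1) / 2) = exp (1 / 2) * (δ / 1.25) := by
    rw [show -(c ^ 2 - 1) / 2 = 1 / 2 + -log (1.25 / δ) by rw [hc2]; ring, exp_add, Real.exp_neg,
      exp_log (by positivity), inv_div]
  -- The constant `1.25` works because `exp (1 / 2) / (2 * 1.25) ≤ 1`.
  have hhalf : exp (1 / 2) ≤ 2 := by
    have := exp_bound_div_one_sub_of_interval (x := 1 / 2) (by norm_num) (by norm_num)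
    norm_num at this
    exact this
  calc exp (-(ε - s / 2) ^ 2 / (2 * s)) / 2 ≤ exp (-(c ^ 2 - 1) / 2) / 2 := by
        gcongr rexp ?_ / 2
        rw [neg_div, neg_div]
        exact neg_le_neg hmargin
    _ ≤ δ := by
        rw [hexp]
        norm_num
        nlinarith [mul_le_mul_of_nonneg_right hhalf hδ.le]

section StdGaussian

variable {ι : Type*} [Fintype ι]

variable (ι) in
noncomputable def stdGaussianPi : Measure (ι → ℝ) := Measure.pi fun _ : ι => gaussianReal 0 1

instance : IsProbabilityMeasure (stdGaussianPi ι) := by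
  unfold stdGaussianPi; infer_instance

lemma stdGaussianPi_map_add (w : ι → ℝ) :
    (stdGaussianPi ι).map (· + w)
      = (stdGaussianPi ι).withDensity fun x => ENNReal.ofReal (exp (w ⬝ᵥ x - w ⬝ᵥ w / 2)) := by
  have hshift : (stdGaussianPi ι).map (· + w) = Measure.pi fun i => gaussianReal (w i) 1 :=
    (measurePreserving_pi _ _ fun i =>
      ⟨measurable_add_const (w i), by simp [gaussianReal_map_add_const]⟩).map_eq
  rw [hshift, funext fun i => gaussianReal_one_eq_withDensity (w i),
    Measure.pi_withDensity_ofReal (by fun_prop), stdGaussianPi]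
  congr 1
  funext x
  rw [← ENNReal.ofReal_prod_of_nonneg (fun _ _ => (exp_pos _).le), ← exp_sum]
  simp only [dotProduct, Finset.sum_sub_distrib, Finset.sum_div, sq]

lemma stdGaussianPi_map_neg : (stdGaussianPi ι).map (fun x => -x) = stdGaussianPi ι :=
  (measurePreserving_pi _ _ fun _ =>
    ⟨measurable_neg, by simp [gaussianReal_map_neg]⟩).map_eq

lemma stdGaussianPi_dotProduct_pos_le_half (w : ι → ℝ) :
    stdGaussianPi ι {x | 0 < w ⬝ᵥ x} ≤ 1 / 2 := by
  have hsymm : stdGaussianPi ι {x | 0 < w ⬝ᵥ x} = stdGaussianPi ι {x | w ⬝ᵥ x < 0} := by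
    conv_lhs => rw [← stdGaussianPi_map_neg]
    rw [Measure.map_apply measurable_neg (measurableSet_lt measurable_const (by fun_prop))]
    simp [dotProduct_neg]
  have hdisj : Disjoint {x | 0 < w ⬝ᵥ x} {x | w ⬝ᵥ x < 0} :=
    Set.disjoint_left.mpr fun x (h₁ : 0 < w ⬝ᵥ x) (h₂ : w ⬝ᵥ x < 0) => lt_asymm h₁ h₂
  have htwice : 2 * stdGaussianPi ι {x | 0 < w ⬝ᵥ x} ≤ 1 := by
    rw [two_mul]
    nth_rw 2 [hsymm]
    rw [← measure_union hdisj (measurableSet_lt (by fun_prop) measurable_const)]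
    exact prob_le_one
  rwa [ENNReal.le_div_iff_mul_le (by simp) (by simp), mul_comm]

/-- Shifting by `u = -(t / ‖w‖²) w` moves the tail `{t < ⟪w, x⟫}` onto the half-space
`{0 < ⟪w, x⟫}`, where the density of the shift is at most `exp (-t² / (2 ‖w‖²))`; the symmetric
half-space contributes the factor `1 / 2` that a Chernoff bound would miss. -/
lemma stdGaussianPi_dotProduct_gt_le {w : ι → ℝ} (hw : 0 < w ⬝ᵥ w) {t : ℝ} (ht : 0 ≤ t) :
    stdGaussianPi ι {x | t < w ⬝ᵥ x} ≤ ENNReal.ofReal (exp (-t ^ 2 / (2 * (w ⬝ᵥ w))) / 2) := by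
  set K := ENNReal.ofReal (exp (-t ^ 2 / (2 * (w ⬝ᵥ w))))
  set u := (-(t / (w ⬝ᵥ w))) • w
  have hpos : MeasurableSet {x : ι → ℝ | 0 < w ⬝ᵥ x} :=
    measurableSet_lt measurable_const (by fun_prop)
  have hshift : {x | t < w ⬝ᵥ x} = (· + u) ⁻¹' {x | 0 < w ⬝ᵥ x} := by
    ext x
    simp only [u, Set.mem_preimage, Set.mem_ofPred_eq, dotProduct_add, dotProduct_smul,
      smul_eq_mul]
    field_simp
    constructor <;> intro <;> linarith
  have hdensity : ∀ x ∈ {x | 0 < w ⬝ᵥ x}, ENNReal.ofReal (exp (u ⬝ᵥ x - u ⬝ᵥ u / 2)) ≤ K := by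
    intro x (hx : 0 < w ⬝ᵥ x)
    refine ENNReal.ofReal_le_ofReal (exp_le_exp.mpr ?_)
    have hux : u ⬝ᵥ x ≤ 0 := by
      simp only [u, smul_dotProduct, smul_eq_mul]
      exact mul_nonpos_of_nonpos_of_nonneg (neg_nonpos.mpr (by positivity)) hx.le
    have huu : u ⬝ᵥ u / 2 = t ^ 2 / (2 * (w ⬝ᵥ w)) := by
      simp only [u, smul_dotProduct, dotProduct_smul, smul_eq_mul]
      field_simp
    rw [huu, neg_div]
    linarith
  calc stdGaussianPi ι {x | t < w ⬝ᵥ x}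
      = (stdGaussianPi ι).map (· + u) {x | 0 < w ⬝ᵥ x} := by
        rw [hshift, Measure.map_apply (measurable_add_const u) hpos]
    _ = ∫⁻ x in {x | 0 < w ⬝ᵥ x}, ENNReal.ofReal (exp (u ⬝ᵥ x - u ⬝ᵥ u / 2))
          ∂stdGaussianPi ι := by
        rw [stdGaussianPi_map_add, withDensity_apply _ hpos]
    _ ≤ K * stdGaussianPi ι {x | 0 < w ⬝ᵥ x} := by
        rw [← setLIntegral_const]
        exact setLIntegral_mono measurable_const hdensity
    _ ≤ K * (1 / 2) := by
        gcongr
        exact stdGaussianPi_dotProduct_pos_le_half w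
    _ = ENNReal.ofReal (exp (-t ^ 2 / (2 * (w ⬝ᵥ w))) / 2) := by
        rw [ENNReal.ofReal_div_of_pos two_pos, ENNReal.ofReal_ofNat, mul_one_div]

lemma distribPrivate_stdGaussianPi_map_add (ε : ℝ) (w : ι → ℝ) :
    DistribPrivate ε (stdGaussianPi ι {x | ε - w ⬝ᵥ w / 2 < w ⬝ᵥ x})
      ((stdGaussianPi ι).map (· + w)) (stdGaussianPi ι) := by
  intro S _
  have hG : MeasurableSet {x : ι → ℝ | w ⬝ᵥ x ≤ ε + w ⬝ᵥ w / 2} :=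
    measurableSet_le (by fun_prop) measurable_const
  have hdensity : ∀ x ∈ {x | w ⬝ᵥ x ≤ ε + w ⬝ᵥ w / 2},
      ENNReal.ofReal (exp (w ⬝ᵥ x - w ⬝ᵥ w / 2)) ≤ ENNReal.ofReal (exp ε) :=
    fun x (hx : w ⬝ᵥ x ≤ _) => ENNReal.ofReal_le_ofReal (exp_le_exp.mpr (by linarith))
  rw [stdGaussianPi_map_add]
  refine (withDensity_apply_le_mul_add_s7 hdensity S).trans ?_
  rw [← stdGaussianPi_map_add, Measure.map_apply (measurable_add_const w) hG.compl]
  gcongr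
  intro x hx
  simp only [Set.mem_preimage, Set.mem_compl_iff, Set.mem_ofPred_eq, not_le,
    dotProduct_add] at hx ⊢
  linarith

lemma distribPrivate_stdGaussianPi_map_add_of_sq_le {ε δ c : ℝ} (hε₀ : 0 < ε) (hε₁ : ε ≤ 1)
    (hδ : 0 < δ) (hc : c = √(2 * log (1.25 / δ))) (hc32 : 3 / 2 ≤ c) {w : ι → ℝ}
    (hw : w ⬝ᵥ w ≤ (ε / c) ^ 2) :
    DistribPrivate ε (ENNReal.ofReal δ) ((stdGaussianPi ι).map (· + w)) (stdGaussianPi ι) := by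
  rcases eq_or_ne w 0 with rfl | hw0
  · simpa using DistribPrivate.refl hε₀.le
  have hs : 0 < w ⬝ᵥ w :=
    (Fintype.sum_nonneg fun i => mul_self_nonneg (w i) : 0 ≤ w ⬝ᵥ w).lt_of_ne'
      fun h => hw0 (dotProduct_self_eq_zero.mp h)
  obtain ⟨ht, htail⟩ := gaussian_noise_calibration hε₀ hε₁ hδ hc hc32 hs hw
  exact (distribPrivate_stdGaussianPi_map_add ε w).mono_delta
    ((stdGaussianPi_dotProduct_gt_le hs ht).trans (ENNReal.ofReal_le_ofReal htail))

end StdGaussian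

lemma Matrix.exists_mulVec_eq_dotProduct_self_eq {n ι : Type*} [Fintype n] [DecidableEq n]
    [Fintype ι] {C : Matrix n ι ℝ} (hC : IsUnit (C * Cᵀ)) (d : n → ℝ) :
    ∃ w, C *ᵥ w = d ∧ w ⬝ᵥ w = d ⬝ᵥ (C * Cᵀ)⁻¹ *ᵥ d := by
  have hsolve : (C * Cᵀ) *ᵥ ((C * Cᵀ)⁻¹ *ᵥ d) = d := by
    rw [mulVec_mulVec, mul_nonsing_inv _ ((isUnit_iff_isUnit_det _).mp hC), one_mulVec]
  refine ⟨Cᵀ *ᵥ ((C * Cᵀ)⁻¹ *ᵥ d), by rwa [mulVec_mulVec _ C], ?_⟩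
  rw [dotProduct_mulVec, vecMul_transpose, mulVec_mulVec, hsolve, dotProduct_comm]

lemma MeasureTheory.Measure.map_const_add_mulVec_eq_map_map_add {n ι : Type*} [Fintype n]
    [Fintype ι] {ν : Measure (ι → ℝ)} {C : Matrix n ι ℝ} {w : ι → ℝ} {μ₁ μ₂ : n → ℝ}
    (hw : C *ᵥ w = μ₁ - μ₂) :
    ν.map (fun x => μ₁ + C *ᵥ x) = (ν.map (· + w)).map (fun x => μ₂ + C *ᵥ x) := by
  rw [Measure.map_map (by fun_prop) (measurable_add_const w)]
  congr 1
  funext x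
  simp only [Function.comp_apply, mulVec_add, hw]
  abel

lemma mconv_gaussN {m : ℕ} (μ ν : Fin m → ℝ) (A B : Matrix (Fin m) (Fin m) ℝ) :
    mconv (gaussN μ A) (gaussN ν B)
      = (stdGaussianPi (Fin m ⊕ Fin m)).map fun x => (μ + ν) + fromCols A B *ᵥ x := by
  rw [mconv, gaussN, gaussN, stdGaussPi, Measure.map_prod_map _ _ (by fun_prop) (by fun_prop),
    Measure.map_map (by fun_prop) (by fun_prop),
    ← (measurePreserving_sumPiEquivProdPi fun _ => gaussianReal 0 1).map_eq,
    Measure.map_map (by fun_prop) (MeasurableEquiv.measurable _), stdGaussianPi]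
  congr 1
  funext x
  change (μ + A *ᵥ (x ∘ Sum.inl)) + (ν + B *ᵥ (x ∘ Sum.inr)) = _
  rw [fromCols_mulVec]
  abel

theorem gaussian_noise_adversarial_uncertainty_general
    (m : ℕ)
    (ε δ c : ℝ) (hε : 0 < ε ∧ ε ≤ 1) (hδ : 0 < δ ∧ δ < 1)
    (hc : c = Real.sqrt (2 * Real.log (1.25 / δ))) (hc32 : 3 / 2 ≤ c)
    (Sig B : Matrix (Fin m) (Fin m) ℝ)
    (hSig : Sig.PosSemidef) (hB : B * B.transpose = Sig)
    (Ψ : Set (Measure (Fin m → ℝ) × Measure (Fin m → ℝ)))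
    (hΨ : ∀ p ∈ Ψ, ∃ (μi μj : Fin m → ℝ) (Sig0 A : Matrix (Fin m) (Fin m) ℝ),
      Sig0.PosDef ∧ A * A.transpose = Sig0 ∧
      dotProduct (μi - μj) ((Sig0 + Sig)⁻¹.mulVec (μi - μj)) ≤ (ε / c) ^ 2 ∧
      p.1 = gaussN μi A ∧ p.2 = gaussN μj A) :
    ∀ p ∈ Ψ, ∀ S : Set (Fin m → ℝ), MeasurableSet S →
      mconv p.1 (gaussN 0 B) S
        ≤ ENNReal.ofReal (Real.exp ε) * mconv p.2 (gaussN 0 B) S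
          + ENNReal.ofReal δ := by
  intro p hp
  obtain ⟨μi, μj, Sig0, A, hSig0, hA, hmah, hp1, hp2⟩ := hΨ p hp
  have hcov : fromCols A B * (fromCols A B)ᵀ = Sig0 + Sig := by
    rw [transpose_fromCols, fromCols_mul_fromRows, hA, hB]
  obtain ⟨w, hw, hww⟩ := exists_mulVec_eq_dotProduct_self_eq
    (hcov ▸ (hSig0.add_posSemidef hSig).isUnit) (μi - μj)
  rw [hp1, hp2, mconv_gaussN, mconv_gaussN, add_zero, add_zero,
    Measure.map_const_add_mulVec_eq_map_map_add hw]
  exact (distribPrivate_stdGaussianPi_map_add_of_sq_le hε.1 hε.2 hδ.1 hc hc32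
    (hww ▸ hcov ▸ hmah)).map (by fun_prop)

/-- **Gaussian noise with adversarial uncertainty** (Corollary A.1): if every pair in
`Ψ` is of the form `(N(μᵢ, Σ₀), N(μⱼ, Σ₀))` with common positive definite covariance
`Σ₀` satisfying `(μᵢ − μⱼ)ᵀ (Σ₀ + Σ)⁻¹ (μᵢ − μⱼ) ≤ (ε/c)²`, where
`c = √(2 ln(1.25/δ))`, then adding noise `N(0, Σ)` (the law of `B·G` with `BBᵀ = Σ`)
gives `(ε, δ)`-distribution privacy w.r.t. `Ψ`. -/
theorem gaussian_noise_adversarial_uncertainty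
    (m : ℕ) (hm : 1 ≤ m)
    (ε δ c : ℝ) (hε : 0 < ε ∧ ε ≤ 1) (hδ : 0 < δ ∧ δ < 1)
    (hc : c = Real.sqrt (2 * Real.log (1.25 / δ))) (hc32 : 3 / 2 ≤ c)
    (Sig B : Matrix (Fin m) (Fin m) ℝ)
    (hSig : Sig.PosSemidef) (hB : B * B.transpose = Sig)
    (Ψ : Set (Measure (Fin m → ℝ) × Measure (Fin m → ℝ)))
    (hΨ : ∀ p ∈ Ψ, ∃ (μi μj : Fin m → ℝ) (Sig0 A : Matrix (Fin m) (Fin m) ℝ),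
      Sig0.PosDef ∧ A * A.transpose = Sig0 ∧
      dotProduct (μi - μj) ((Sig0 + Sig)⁻¹.mulVec (μi - μj)) ≤ (ε / c) ^ 2 ∧
      p.1 = gaussN μi A ∧ p.2 = gaussN μj A) :
    ∀ p ∈ Ψ, ∀ S : Set (Fin m → ℝ), MeasurableSet S →
      mconv p.1 (gaussN 0 B) S
        ≤ ENNReal.ofReal (Real.exp ε) * mconv p.2 (gaussN 0 B) S
          + ENNReal.ofReal δ :=
  gaussian_noise_adversarial_uncertainty_general m ε δ c hε hδ hc hc32 Sig B hSig hB Ψ hΨ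
end

section
/- Let m ≥ 1, let ε ∈ (0, 1], let δ ∈ (0, 1) be such that c = √(2 ln(1.25/δ)) satisfies c ≥ 3/2, and let v ∈ ℝ^m be a unit vector. Let Ψ be a set of pairs of Gaussian measures of the form (N(μᵢ, Σ₀), N(μⱼ, Σ₀)) with a common symmetric positive definite covariance Σ₀ for each pair and with μᵢ − μⱼ parallel to v, say μᵢ − μⱼ = α v where α = (μᵢ − μⱼ)ᵀv. Let σ² > 0 be such that for every pair in Ψ the matrix Σ₀ + (σ² − (αc/ε)²)·v vᵀ is positive definite. Let ζ be the law of σ·G·v where G is a one-dimensional standard Gaussian (i.e., ζ = N(0, σ² v vᵀ)). Then the additive-noise mechanism with noise ζ satisfies (ε, δ)-distribution privacy with respect to Ψ: for every pair in Ψ and every measurable S ⊆ ℝ^m, (N(μᵢ, Σ₀) ∗ ζ)(S) ≤ e^ε · (N(μⱼ, Σ₀) ∗ ζ)(S) + δ. -/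
/-!
Both outputs of the mechanism are push-forwards of the standard Gaussian `γ` on `ℝ^m × ℝ`
(data seed, noise seed) under the affine maps `F μ (x, g) = μ + A x + σ g v`, and
`F μⱼ = F μᵢ ∘ (· + w)` for a shift `w` with `|w| < ε / c`: with `B = [A | σ v]`, so that
`B Bᵀ = Σ₀ + σ² v vᵀ`, take the minimum-norm solution `w = -α Bᵀ (B Bᵀ)⁻¹ v` of
`B w = μⱼ - μᵢ`; positive definiteness of `Σ₀ + (σ² - (αc/ε)²) v vᵀ`, evaluated at
`(B Bᵀ)⁻¹ v`, is exactly the bound on `|w|`.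

By Cameron–Martin the law of `X + w`, `X ∼ γ`, has density `exp L` with respect to `γ`, where
`L x = ⟪w, x⟫ - |w|² / 2`. Hence `γ T ≤ e^ε γ (T - w) + γ {L < -ε}`, and since `⟪w, ·⟫` is
`N(0, |w|²)`-distributed under `γ`, the Mills-ratio tail bound together with
`c = √(2 ln (1.25/δ)) ≥ 3/2` and `ε ≤ 1` bounds the last term by `δ`.
-/

open MeasureTheory ProbabilityTheory

open Real Set Matrix Filter Topology
open scoped NNReal ENNReal

namespace DirectionalGaussian

theorem measure_le_exp_mul_withDensity_add {α : Type*} [MeasurableSpace α] (P : Measure α)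
    {L : α → ℝ} (hL : Measurable L) (ε : ℝ) {T : Set α} (hT : MeasurableSet T) :
    P T ≤ ENNReal.ofReal (exp ε) * P.withDensity (fun x => ENNReal.ofReal (exp (L x))) T
      + P {x | L x < -ε} := by
  have hG : MeasurableSet {x | -ε ≤ L x} := measurableSet_le measurable_const hL
  calc P T ≤ P (T ∩ {x | -ε ≤ L x}) + P (T \ {x | -ε ≤ L x}) := measure_le_inter_add_sdiff _ _ _
    _ ≤ _ := by
      gcongr ?_ + ?_
      · rw [withDensity_apply _ hT, ← lintegral_const_mul' _ _ ENNReal.ofReal_ne_top,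
          ← setLIntegral_one]
        refine (setLIntegral_mono' (hT.inter hG) fun x hx => ?_).trans
          (lintegral_mono_set inter_subset_left)
        rw [← ENNReal.ofReal_mul (exp_pos _).le, ← exp_add, ← ENNReal.ofReal_one]
        exact ENNReal.ofReal_le_ofReal (one_le_exp (by linarith [hx.2.out]))
      · exact measure_mono fun x hx => show L x < -ε from not_le.1 hx.2

theorem gaussianReal_map_add_const_eq_withDensity (b : ℝ) :
    (gaussianReal 0 1).map (· + b) =
      (gaussianReal 0 1).withDensity (fun x => ENNReal.ofReal (exp (b * x - b ^ 2 / 2))) := by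
  rw [gaussianReal_map_add_const, zero_add, gaussianReal_of_var_ne_zero _ one_ne_zero,
    gaussianReal_of_var_ne_zero _ one_ne_zero, ← withDensity_mul _ (measurable_gaussianPDF _ _)
      (by fun_prop)]
  congr 1 with x
  rw [Pi.mul_apply, gaussianPDF, gaussianPDF, ← ENNReal.ofReal_mul (gaussianPDFReal_nonneg _ _ _),
    gaussianPDFReal, gaussianPDFReal, mul_assoc _ (rexp _), ← exp_add, NNReal.coe_one]
  ring_nf

theorem integrable_mul_exp_neg_sq_div_two : Integrable fun x : ℝ => x * exp (-x ^ 2 / 2) := by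
  simpa [neg_div, div_eq_inv_mul] using integrable_mul_exp_neg_mul_sq (b := 1 / 2) (by norm_num)

theorem integral_Ioi_mul_exp_neg_sq_div_two (t : ℝ) :
    ∫ x in Ioi t, x * exp (-x ^ 2 / 2) = exp (-t ^ 2 / 2) := by
  have hderiv (x : ℝ) : HasDerivAt (fun y => -exp (-y ^ 2 / 2)) (x * exp (-x ^ 2 / 2)) x := by
    have h : HasDerivAt (fun y : ℝ => -y ^ 2 / 2) (-x) x := by
      simpa using (((hasDerivAt_pow 2 x).neg).div_const 2).congr_deriv (by ring : _ = -x)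
    exact h.exp.neg.congr_deriv (by ring)
  have hlim : Tendsto (fun y : ℝ => -exp (-y ^ 2 / 2)) atTop (𝓝 0) := by
    have : Tendsto (fun y : ℝ => -y ^ 2 / 2) atTop atBot := by
      simp_rw [neg_div]
      exact tendsto_neg_atTop_atBot.comp
        ((tendsto_pow_atTop two_ne_zero).atTop_div_const two_pos)
    simpa using (tendsto_exp_atBot.comp this).neg
  simpa using integral_Ioi_of_hasDerivAt_of_tendsto' (fun x _ => hderiv x)
    integrable_mul_exp_neg_sq_div_two.integrableOn hlim

theorem gaussianReal_Ici_le {t : ℝ} (ht : 0 < t) :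
    gaussianReal 0 1 (Ici t) ≤ ENNReal.ofReal (exp (-t ^ 2 / 2) / (t * √(2 * π))) := by
  rw [gaussianReal_apply_eq_integral 0 one_ne_zero, integral_Ici_eq_integral_Ioi]
  gcongr
  calc ∫ x in Ioi t, gaussianPDFReal 0 1 x
      ≤ ∫ x in Ioi t, (t * √(2 * π))⁻¹ * (x * exp (-x ^ 2 / 2)) := by
        refine setIntegral_mono_on (integrable_gaussianPDFReal 0 1).integrableOn
          (integrable_mul_exp_neg_sq_div_two.const_mul _).integrableOn measurableSet_Ioi
          fun x (hx : t < x) => ?_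
        simp only [gaussianPDFReal, NNReal.coe_one, mul_one, sub_zero]
        rw [mul_inv, mul_comm t⁻¹, mul_assoc, ← mul_assoc t⁻¹]
        gcongr
        exact le_mul_of_one_le_left (exp_pos _).le ((one_le_inv_mul₀ ht).2 hx.le)
    _ = exp (-t ^ 2 / 2) / (t * √(2 * π)) := by
        rw [integral_const_mul, integral_Ioi_mul_exp_neg_sq_div_two, inv_mul_eq_div]

theorem gaussianReal_Iio_half_sub_le {ε c : ℝ} (hε : 0 < ε) (hc : 0 < c) {r : ℝ≥0}
    (hr : (r : ℝ) ≤ (ε / c) ^ 2) :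
    gaussianReal 0 r (Iio (r / 2 - ε)) ≤ gaussianReal 0 1 (Ici (c - ε / (2 * c))) := by
  set s := √(r : ℝ)
  have hs : s ≤ ε / c := by
    simpa [s, Real.sqrt_sq (div_pos hε hc).le] using Real.sqrt_le_sqrt hr
  have hsr : s ^ 2 = r := Real.sq_sqrt r.coe_nonneg
  -- `N(0, r)` is the law of `-s Z`, and `-s Z < s² / 2 - ε` forces `Z > ε / s - s / 2`,
  -- which is at least `c - ε / (2 c)` because `s ≤ ε / c`.
  have hlaw : (gaussianReal 0 1).map (fun y => -s * y) = gaussianReal 0 r := by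
    rw [gaussianReal_map_const_mul, mul_zero, mul_one]
    congr
    simp [hsr]
  rw [← hlaw, Measure.map_apply (by fun_prop) measurableSet_Iio]
  refine measure_mono fun y (hy : -s * y < r / 2 - ε) => ?_
  have hsc : s * c ≤ ε := (le_div_iff₀ hc).1 hs
  rw [← hsr] at hy
  by_contra hy'
  rw [mem_Ici, not_le, show ε / (2 * c) = ε / c / 2 by ring] at hy'
  nlinarith [mul_le_mul_of_nonneg_left hy'.le (Real.sqrt_nonneg r),
    mul_nonneg (Real.sqrt_nonneg r) (sub_nonneg.2 hs)]

theorem exp_neg_sq_div_two_of_eq_sqrt_log {δ c : ℝ} (hδ : 0 < δ) (hc0 : 0 < c)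
    (hc : c = √(2 * log (1.25 / δ))) : exp (-c ^ 2 / 2) = δ / 1.25 := by
  have hlog : 0 ≤ 2 * log (1.25 / δ) := (Real.sqrt_pos.1 (hc ▸ hc0)).le
  rw [hc, Real.sq_sqrt hlog, show -(2 * log (1.25 / δ)) / 2 = -log (1.25 / δ) by ring, exp_neg,
    exp_log (by positivity), inv_div]

theorem gaussianReal_Iio_half_sub_le_ofReal {ε δ c : ℝ} (hε : 0 < ε) (hε1 : ε ≤ 1) (hδ : 0 < δ)
    (hc : c = √(2 * log (1.25 / δ))) (hc32 : 3 / 2 ≤ c) {r : ℝ≥0} (hr : (r : ℝ) ≤ (ε / c) ^ 2) :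
    gaussianReal 0 r (Iio (r / 2 - ε)) ≤ ENNReal.ofReal δ := by
  have hc0 : 0 < c := by linarith
  set t := c - ε / (2 * c)
  have hεc : ε / (2 * c) ≤ 1 / 3 := by rw [div_le_div_iff₀ (by positivity) three_pos]; linarith
  have ht : 1 ≤ t := by linarith
  have ht2 : c ^ 2 - 1 ≤ t ^ 2 := by
    have : t ^ 2 = c ^ 2 - ε + (ε / (2 * c)) ^ 2 := by simp only [t]; field_simp; ring
    nlinarith
  have hexp_half : exp (1 / 2) ≤ 2 := by
    nlinarith [exp_pos (1 / 2), exp_one_lt_d9, show exp (1 / 2) * exp (1 / 2) = exp 1 by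
      rw [← exp_add]; norm_num]
  have hsqrt : 2 ≤ √(2 * π) := Real.le_sqrt_of_sq_le (by nlinarith [pi_gt_three])
  calc gaussianReal 0 r (Iio (r / 2 - ε)) ≤ gaussianReal 0 1 (Ici t) :=
        gaussianReal_Iio_half_sub_le hε hc0 hr
    _ ≤ ENNReal.ofReal (exp (-t ^ 2 / 2) / (t * √(2 * π))) := gaussianReal_Ici_le (by linarith)
    _ ≤ ENNReal.ofReal δ := by
        gcongr
        rw [div_le_iff₀ (by positivity)]
        calc exp (-t ^ 2 / 2) ≤ exp (1 / 2) * exp (-c ^ 2 / 2) := by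
              rw [← exp_add]; gcongr; linarith
          _ ≤ 2 * (δ / 1.25) := by
              rw [exp_neg_sq_div_two_of_eq_sqrt_log hδ hc0 hc]; gcongr
          _ ≤ δ * 2 := by norm_num; linarith
          _ ≤ δ * (t * √(2 * π)) := by gcongr; nlinarith

theorem pi_withDensity {ι : Type*} [Fintype ι] {X : ι → Type*} [∀ i, MeasurableSpace (X i)]
    {μ : ∀ i, Measure (X i)} [∀ i, IsProbabilityMeasure (μ i)] {f : ∀ i, X i → ℝ≥0∞}
    (hf : ∀ i, Measurable (f i)) [∀ i, SigmaFinite ((μ i).withDensity (f i))] :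
    Measure.pi (fun i => (μ i).withDensity (f i)) =
      (Measure.pi μ).withDensity (fun x => ∏ i, f i (x i)) := by
  refine Measure.pi_eq fun s hs => ?_
  have hind : (univ.pi s).indicator (fun x => ∏ i, f i (x i)) =
      fun x => ∏ i, (s i).indicator (f i) (x i) := by
    ext x
    by_cases hx : x ∈ univ.pi s
    · simp [indicator_of_mem hx, indicator_of_mem (hx _ (mem_univ _))]
    · obtain ⟨i, -, hi⟩ := not_forall₂.1 hx
      rw [indicator_of_notMem hx, Finset.prod_eq_zero (Finset.mem_univ i)
        (indicator_of_notMem hi (f i))]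
  have hmeas (i : ι) : Measurable ((s i).indicator (f i)) := (hf i).indicator (hs i)
  rw [withDensity_apply _ (MeasurableSet.univ_pi hs), ← lintegral_indicator (.univ_pi hs), hind,
    lintegral_prod_eq_prod_lintegral_of_indepFun _ _ (iIndepFun_pi fun i => (hmeas i).aemeasurable)
      fun i => (hmeas i).comp (measurable_pi_apply i)]
  refine Finset.prod_congr rfl fun i _ => ?_
  rw [(measurePreserving_eval μ i).lintegral_comp (hmeas i), lintegral_indicator (hs i),
    withDensity_apply _ (hs i)]

instance (n : ℕ) : IsProbabilityMeasure (stdGaussPi n) := by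
  unfold stdGaussPi; infer_instance

theorem stdGaussPi_map_add_eq_withDensity (n : ℕ) (w : Fin n → ℝ) :
    (stdGaussPi n).map (· + w) =
      (stdGaussPi n).withDensity (fun x => ENNReal.ofReal (exp (w ⬝ᵥ x - w ⬝ᵥ w / 2))) := by
  have (i : Fin n) : SigmaFinite ((gaussianReal 0 1).withDensity
      (fun x => ENNReal.ofReal (exp (w i * x - w i ^ 2 / 2)))) := by
    rw [← gaussianReal_map_add_const_eq_withDensity]; infer_instance
  rw [stdGaussPi, show (· + w) = fun (x : Fin n → ℝ) i => x i + w i from rfl,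
    Measure.pi_map_pi fun i => (measurable_add_const _).aemeasurable]
  simp_rw [gaussianReal_map_add_const_eq_withDensity]
  rw [pi_withDensity fun i => by fun_prop]
  congr 1 with x
  rw [← ENNReal.ofReal_prod_of_nonneg fun i _ => (exp_pos _).le, ← exp_sum]
  simp [dotProduct, Finset.sum_sub_distrib, Finset.sum_div, sq]

theorem stdGaussPi_map_dotProduct (n : ℕ) (w : Fin n → ℝ) :
    (stdGaussPi n).map (w ⬝ᵥ ·) = gaussianReal 0 (w ⬝ᵥ w).toNNReal := by
  have : (w ⬝ᵥ ·) = innerSL ℝ (WithLp.toLp 2 w) ∘ WithLp.toLp 2 := by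
    ext x; simp [EuclideanSpace.inner_toLp_toLp, dotProduct_comm]
  rw [stdGaussPi, this, ← Measure.map_map (by fun_prop) (by fun_prop), map_pi_eq_stdGaussian,
    IsGaussian.map_eq_gaussianReal, integral_strongDual_stdGaussian, variance_dual_stdGaussian,
    innerSL_apply_norm, EuclideanSpace.norm_sq_eq]
  simp [dotProduct, sq]

noncomputable def stdGaussProd (m : ℕ) : Measure ((Fin m → ℝ) × ℝ) :=
  (stdGaussPi m).prod (gaussianReal 0 1)

def prodDot {m : ℕ} (w p : (Fin m → ℝ) × ℝ) : ℝ := w.1 ⬝ᵥ p.1 + w.2 * p.2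

theorem prodDot_self_nonneg {m : ℕ} (w : (Fin m → ℝ) × ℝ) : 0 ≤ prodDot w w :=
  add_nonneg (by simpa using dotProduct_self_star_nonneg w.1) (mul_self_nonneg w.2)

theorem map_conv_map {M X Y : Type*} [AddMonoid M] [MeasurableSpace M] [MeasurableAdd₂ M]
    [MeasurableSpace X] [MeasurableSpace Y] {μ : Measure X} {ν : Measure Y} [SFinite μ]
    [SFinite ν] {f : X → M} {g : Y → M} (hf : Measurable f) (hg : Measurable g) :
    μ.map f ∗ ν.map g = (μ.prod ν).map (fun p => f p.1 + g p.2) := by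
  rw [Measure.conv, Measure.map_prod_map _ _ hf hg, Measure.map_map measurable_add (hf.prodMap hg)]
  rfl

theorem stdGaussProd_map_add_eq_withDensity (m : ℕ) (w : (Fin m → ℝ) × ℝ) :
    (stdGaussProd m).map (· + w) = (stdGaussProd m).withDensity
      (fun p => ENNReal.ofReal (exp (prodDot w p - prodDot w w / 2))) := by
  rw [stdGaussProd, show (· + w) = Prod.map (· + w.1) (· + w.2) from rfl,
    ← Measure.map_prod_map _ _ (measurable_add_const _) (measurable_add_const _),
    stdGaussPi_map_add_eq_withDensity, gaussianReal_map_add_const_eq_withDensity,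
    prod_withDensity (by fun_prop) (by fun_prop)]
  congr 1 with p
  rw [← ENNReal.ofReal_mul (exp_pos _).le, ← exp_add, prodDot, prodDot]
  ring_nf

theorem stdGaussProd_map_prodDot (m : ℕ) (w : (Fin m → ℝ) × ℝ) :
    (stdGaussProd m).map (prodDot w) = gaussianReal 0 (prodDot w w).toNNReal := by
  rw [stdGaussProd, show prodDot w = fun p => w.1 ⬝ᵥ p.1 + w.2 * p.2 from rfl,
    ← map_conv_map (by fun_prop) (by fun_prop), stdGaussPi_map_dotProduct,
    gaussianReal_map_const_mul, gaussianReal_conv_gaussianReal]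
  congr 1
  · simp
  · ext
    have h : 0 ≤ w.1 ⬝ᵥ w.1 := by simpa using dotProduct_self_star_nonneg w.1
    rw [NNReal.coe_add, NNReal.coe_mul, NNReal.coe_mk, NNReal.coe_one, mul_one,
      Real.coe_toNNReal _ h, Real.coe_toNNReal _ (by exact prodDot_self_nonneg w), sq]

theorem stdGaussProd_le_exp_mul_preimage_add_add {m : ℕ} {ε δ c : ℝ} (hε : 0 < ε) (hε1 : ε ≤ 1)
    (hδ : 0 < δ) (hc : c = √(2 * log (1.25 / δ))) (hc32 : 3 / 2 ≤ c) {w : (Fin m → ℝ) × ℝ}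
    (hw : prodDot w w ≤ (ε / c) ^ 2) {T : Set ((Fin m → ℝ) × ℝ)} (hT : MeasurableSet T) :
    stdGaussProd m T ≤
      ENNReal.ofReal (exp ε) * stdGaussProd m ((· + w) ⁻¹' T) + ENNReal.ofReal δ := by
  have hmeas : Measurable (prodDot w) := by unfold prodDot; fun_prop
  set r := (prodDot w w).toNNReal
  have hr : (r : ℝ) = prodDot w w := Real.coe_toNNReal _ (prodDot_self_nonneg w)
  calc stdGaussProd m T
      ≤ ENNReal.ofReal (exp ε) * (stdGaussProd m).withDensity
          (fun p => ENNReal.ofReal (exp (prodDot w p - prodDot w w / 2))) T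
        + stdGaussProd m {p | prodDot w p - prodDot w w / 2 < -ε} :=
        measure_le_exp_mul_withDensity_add _ (hmeas.sub_const _) ε hT
    _ = ENNReal.ofReal (exp ε) * stdGaussProd m ((· + w) ⁻¹' T)
        + gaussianReal 0 r (Iio (r / 2 - ε)) := by
        rw [← stdGaussProd_map_add_eq_withDensity, Measure.map_apply (measurable_add_const w) hT,
          ← stdGaussProd_map_prodDot, Measure.map_apply hmeas measurableSet_Iio, hr]
        congr 2 with p
        simp only [mem_ofPred_eq, mem_preimage, mem_Iio]
        constructor <;> intro h <;> linarith
    _ ≤ _ := by gcongr; exact gaussianReal_Iio_half_sub_le_ofReal hε hε1 hδ hc hc32 (hr ▸ hw)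

section MinimumNorm

variable {n : Type*} [Fintype n]

theorem mulVec_nonsing_inv_mulVec [DecidableEq n] {R : Type*} [CommRing R] {S : Matrix n n R}
    (hS : IsUnit S.det) (v : n → R) : S *ᵥ (S⁻¹ *ᵥ v) = v := by
  rw [mulVec_mulVec, mul_nonsing_inv _ hS, one_mulVec]

theorem posDef_of_posDef_sub_smul_vecMulVec {S : Matrix n n ℝ} {v : n → ℝ} {t : ℝ} (ht : 0 ≤ t)
    (h : (S - t • vecMulVec v v).PosDef) : S.PosDef := by
  simpa using h.add_posSemidef ((posSemidef_vecMulVec_self_star v).smul ht)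

theorem mul_dotProduct_inv_mulVec_lt_one [DecidableEq n] {S : Matrix n n ℝ} {v : n → ℝ} {k : ℝ}
    (h : (S - k ^ 2 • vecMulVec v v).PosDef) : k ^ 2 * (v ⬝ᵥ S⁻¹ *ᵥ v) < 1 := by
  have hS := posDef_of_posDef_sub_smul_vecMulVec (sq_nonneg k) h
  have hSu := mulVec_nonsing_inv_mulVec ((isUnit_iff_isUnit_det S).mp hS.isUnit) v
  set u := S⁻¹ *ᵥ v
  rcases eq_or_ne u 0 with hu | hu
  · simp [hu]
  have hq : 0 < v ⬝ᵥ u := by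
    simpa [hSu, dotProduct_comm] using hS.dotProduct_mulVec_pos hu
  have hquad := h.dotProduct_mulVec_pos hu
  simp only [star_trivial, sub_mulVec, smul_mulVec, vecMulVec_mulVec, hSu, dotProduct_sub,
    dotProduct_smul, MulOpposite.smul_eq_mul_unop, MulOpposite.unop_op, smul_eq_mul,
    dotProduct_comm u v] at hquad
  nlinarith

theorem exists_mulVec_add_smul_eq_self [DecidableEq n] (A : Matrix n n ℝ) (v : n → ℝ) {s k : ℝ}
    (h : (A * Aᵀ + (s ^ 2 - k ^ 2) • vecMulVec v v).PosDef) :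
    ∃ (x : n → ℝ) (y : ℝ), A *ᵥ x + (s * y) • v = v ∧ k ^ 2 * (x ⬝ᵥ x + y ^ 2) < 1 := by
  set S := A * Aᵀ + s ^ 2 • vecMulVec v v
  have hS : (S - k ^ 2 • vecMulVec v v).PosDef := by convert h using 1; module
  have hSinv := mulVec_nonsing_inv_mulVec ((isUnit_iff_isUnit_det S).mp
    (posDef_of_posDef_sub_smul_vecMulVec (sq_nonneg k) hS).isUnit) v
  set u := S⁻¹ *ᵥ v
  have hSu : S *ᵥ u = A *ᵥ (Aᵀ *ᵥ u) + (s * (s * (v ⬝ᵥ u))) • v := by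
    simp only [S, add_mulVec, smul_mulVec, vecMulVec_mulVec, mulVec_mulVec, op_smul_eq_smul,
      smul_smul]
    ring_nf
  refine ⟨Aᵀ *ᵥ u, s * (v ⬝ᵥ u), by rw [← hSu, hSinv], ?_⟩
  have hnorm : Aᵀ *ᵥ u ⬝ᵥ Aᵀ *ᵥ u + (s * (v ⬝ᵥ u)) ^ 2 = v ⬝ᵥ u :=
    calc _ = (A *ᵥ Aᵀ *ᵥ u + (s * (s * (v ⬝ᵥ u))) • v) ⬝ᵥ u := by
          rw [add_dotProduct, smul_dotProduct, dotProduct_mulVec, vecMul_transpose, smul_eq_mul,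
            dotProduct_comm v u]
          ring
      _ = v ⬝ᵥ u := by rw [← hSu, hSinv]
  rw [hnorm]
  exact mul_dotProduct_inv_mulVec_lt_one hS

end MinimumNorm

def outputMap {m : ℕ} (μ : Fin m → ℝ) (A : Matrix (Fin m) (Fin m) ℝ) (s : ℝ) (v : Fin m → ℝ)
    (p : (Fin m → ℝ) × ℝ) : Fin m → ℝ :=
  μ + A *ᵥ p.1 + (s * p.2) • v

theorem measurable_outputMap {m : ℕ} {μ : Fin m → ℝ} {A : Matrix (Fin m) (Fin m) ℝ} {s : ℝ}
    {v : Fin m → ℝ} : Measurable (outputMap μ A s v) := by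
  unfold outputMap; fun_prop

theorem mconv_gaussN_map_smul {m : ℕ} (μ : Fin m → ℝ) (A : Matrix (Fin m) (Fin m) ℝ) (s : ℝ)
    (v : Fin m → ℝ) :
    mconv (gaussN μ A) ((gaussianReal 0 1).map (fun g => (s * g) • v)) =
      (stdGaussProd m).map (outputMap μ A s v) :=
  map_conv_map (by fun_prop) (by fun_prop)

theorem exists_outputMap_eq_comp_add {m : ℕ} {A : Matrix (Fin m) (Fin m) ℝ} {v μi μj : Fin m → ℝ}
    {α s κ : ℝ} (hdir : μi - μj = α • v)
    (hpd : (A * Aᵀ + (s ^ 2 - (α * κ) ^ 2) • vecMulVec v v).PosDef) :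
    ∃ w, κ ^ 2 * prodDot w w < 1 ∧ outputMap μj A s v = outputMap μi A s v ∘ (· + w) := by
  obtain ⟨x, y, hxy, hk⟩ := exists_mulVec_add_smul_eq_self A v hpd
  refine ⟨-α • (x, y), ?_, ?_⟩
  · calc κ ^ 2 * prodDot (-α • (x, y)) (-α • (x, y)) = (α * κ) ^ 2 * (x ⬝ᵥ x + y ^ 2) := by
          simp only [prodDot, Prod.smul_fst, Prod.smul_snd, smul_dotProduct, dotProduct_smul,
            smul_eq_mul]
          ring
      _ < 1 := hk
  · have hμj : μj = μi - α • (A *ᵥ x + (s * y) • v) := by rw [hxy, ← hdir]; abel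
    funext p
    simp only [outputMap, Function.comp_apply, Prod.fst_add, Prod.snd_add, Prod.smul_fst,
      Prod.smul_snd, mulVec_add, mulVec_smul, hμj]
    module

end DirectionalGaussian

open DirectionalGaussian in
theorem directional_gaussian_adversarial_uncertainty_general
    (m : ℕ)
    (ε δ c : ℝ) (hε : 0 < ε ∧ ε ≤ 1) (hδ : 0 < δ ∧ δ < 1)
    (hc : c = Real.sqrt (2 * Real.log (1.25 / δ))) (hc32 : 3 / 2 ≤ c)
    (v : Fin m → ℝ)
    (σsq : ℝ) (hσsq : 0 < σsq)
    (Ψ : Set (Measure (Fin m → ℝ) × Measure (Fin m → ℝ)))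
    (hΨ : ∀ p ∈ Ψ, ∃ (μi μj : Fin m → ℝ) (Sig0 A : Matrix (Fin m) (Fin m) ℝ),
      Sig0.PosDef ∧ A * A.transpose = Sig0 ∧
      μi - μj = (dotProduct (μi - μj) v) • v ∧
      (Sig0 + (σsq - (dotProduct (μi - μj) v * c / ε) ^ 2) •
        Matrix.vecMulVec v v).PosDef ∧
      p.1 = gaussN μi A ∧ p.2 = gaussN μj A) :
    ∀ p ∈ Ψ, ∀ S : Set (Fin m → ℝ), MeasurableSet S →
      mconv p.1 ((gaussianReal 0 1).map (fun g => (Real.sqrt σsq * g) • v)) S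
        ≤ ENNReal.ofReal (Real.exp ε)
            * mconv p.2 ((gaussianReal 0 1).map (fun g => (Real.sqrt σsq * g) • v)) S
          + ENNReal.ofReal δ := by
  intro p hp S hS
  obtain ⟨μi, μj, Sig0, A, -, rfl, hdir, hpd, hp₁, hp₂⟩ := hΨ p hp
  obtain ⟨w, hw, hshift⟩ := exists_outputMap_eq_comp_add (s := √σsq) (κ := c / ε) hdir
    (by rwa [Real.sq_sqrt hσsq.le, ← mul_div_assoc])
  have hw' : prodDot w w ≤ (ε / c) ^ 2 := by
    have hK : 0 < (c / ε) ^ 2 := pow_pos (div_pos (by linarith) hε.1) 2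
    rw [show (ε / c) ^ 2 = 1 / (c / ε) ^ 2 by rw [one_div, ← inv_pow, inv_div], le_div_iff₀ hK]
    linarith
  rw [hp₁, hp₂, mconv_gaussN_map_smul, mconv_gaussN_map_smul,
    Measure.map_apply measurable_outputMap hS, Measure.map_apply measurable_outputMap hS, hshift,
    preimage_comp]
  exact stdGaussProd_le_exp_mul_preimage_add_add hε.1 hε.2 hδ.1 hc hc32 hw'
    (measurable_outputMap hS)

/-- **Directional Gaussian mechanism with adversarial uncertainty, DauM**
(Theorem A.4): for pairs `(N(μᵢ, Σ₀), N(μⱼ, Σ₀))` with common positive definite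
covariance `Σ₀` and `μᵢ − μⱼ = α v` parallel to the unit vector `v`
(`α = (μᵢ − μⱼ)ᵀ v`), if `σ² > 0` is such that `Σ₀ + (σ² − (αc/ε)²)·v vᵀ` is positive
definite for every pair, where `c = √(2 ln(1.25/δ))`, then adding noise `σ·G·v` with
`G` standard Gaussian (i.e. `N(0, σ² v vᵀ)`) gives `(ε, δ)`-distribution privacy
w.r.t. `Ψ`. -/
theorem directional_gaussian_adversarial_uncertainty
    (m : ℕ) (hm : 1 ≤ m)
    (ε δ c : ℝ) (hε : 0 < ε ∧ ε ≤ 1) (hδ : 0 < δ ∧ δ < 1)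
    (hc : c = Real.sqrt (2 * Real.log (1.25 / δ))) (hc32 : 3 / 2 ≤ c)
    (v : Fin m → ℝ) (hv : l2norm v = 1)
    (σsq : ℝ) (hσsq : 0 < σsq)
    (Ψ : Set (Measure (Fin m → ℝ) × Measure (Fin m → ℝ)))
    (hΨ : ∀ p ∈ Ψ, ∃ (μi μj : Fin m → ℝ) (Sig0 A : Matrix (Fin m) (Fin m) ℝ),
      Sig0.PosDef ∧ A * A.transpose = Sig0 ∧
      μi - μj = (dotProduct (μi - μj) v) • v ∧
      (Sig0 + (σsq - (dotProduct (μi - μj) v * c / ε) ^ 2) •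
        Matrix.vecMulVec v v).PosDef ∧
      p.1 = gaussN μi A ∧ p.2 = gaussN μj A) :
    ∀ p ∈ Ψ, ∀ S : Set (Fin m → ℝ), MeasurableSet S →
      mconv p.1 ((gaussianReal 0 1).map (fun g => (Real.sqrt σsq * g) • v)) S
        ≤ ENNReal.ofReal (Real.exp ε)
            * mconv p.2 ((gaussianReal 0 1).map (fun g => (Real.sqrt σsq * g) • v)) S
          + ENNReal.ofReal δ :=
  directional_gaussian_adversarial_uncertainty_general m ε δ c hε hδ hc hc32 v σsq hσsq Ψ hΨ
end

section
/- Let m ≥ 1, let κ be a Markov kernel from ℝ^m to a measurable output space Ω, and let ε ≥ 0, δ ≥ 0, λ ≥ 0, η ≥ 0. Let f_i, f_j, f̃_i, f̃_j be probability measures on ℝ^m. Suppose: (1) for every measurable S ⊆ Ω, (f̃_i.bind κ)(S) ≤ e^ε · (f̃_j.bind κ)(S) + δ, where μ.bind κ is the measure S ↦ ∫ κ(t)(S) dμ(t); and (2) for each θ ∈ {i, j} and every measurable A ⊆ ℝ^m, both f_θ(A) ≤ e^λ · f̃_θ(A) + η and f̃_θ(A) ≤ e^λ · f_θ(A) + η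 (i.e., the η-approximate max-divergences between f_θ and f̃_θ in both directions are at most λ). Then for every measurable S ⊆ Ω, (f_i.bind κ)(S) ≤ e^{ε + 2λ} · (f_j.bind κ)(S) + (1 + e^{ε + λ})·η + e^λ·δ. -/
open MeasureTheory ProbabilityTheory Set
open scoped ENNReal

/-! Post-processing by a Markov kernel preserves an approximate max-divergence bound, and such
bounds compose along `fᵢ → f̃ᵢ → f̃ⱼ → fⱼ`: the multipliers `e^λ e^ε e^λ` multiply, while each
additive slack is scaled by the multipliers in front of it. -/

namespace MeasureTheory.Measure

variable {α β : Type*} [MeasurableSpace α] [MeasurableSpace β]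

/-- `MaxDivLE μ ν (e^λ) δ` says that `D_∞^δ(μ‖ν) ≤ λ`. -/
def MaxDivLE (μ ν : Measure α) (c η : ℝ≥0∞) : Prop :=
  ∀ A, MeasurableSet A → μ A ≤ c * ν A + η

lemma setLIntegral_Ioi_zero_meas_lt_eq_Ioc (μ : Measure α) {g : α → ℝ} (hg : ∀ a, g a ≤ 1) :
    ∫⁻ t in Ioi 0, μ {a | t < g a} = ∫⁻ t in Ioc 0 1, μ {a | t < g a} := by
  have hempty : ∀ t ∈ Ioi (1 : ℝ), μ {a | t < g a} = 0 := fun t ht => by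
    simp [show {a | t < g a} = ∅ from eq_empty_of_forall_notMem
      fun a ha => (hg a).not_gt (lt_trans ht ha)]
  rw [← Ioc_union_Ioi_eq_Ioi zero_le_one, lintegral_union measurableSet_Ioi
    (Ioc_disjoint_Ioi le_rfl), setLIntegral_congr_fun measurableSet_Ioi hempty]
  simp

namespace MaxDivLE

variable {μ ν ρ : Measure α} {c c' d η η' ξ : ℝ≥0∞}

lemma mono (h : MaxDivLE μ ν c η) (hc : c ≤ c') (hη : η ≤ η') : MaxDivLE μ ν c' η' :=
  fun A hA => (h A hA).trans (by gcongr)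

lemma trans (hμν : MaxDivLE μ ν c η) (hνρ : MaxDivLE ν ρ d ξ) :
    MaxDivLE μ ρ (c * d) (c * ξ + η) := fun A hA =>
  calc μ A ≤ c * ν A + η := hμν A hA
    _ ≤ c * (d * ρ A + ξ) + η := by gcongr; exact hνρ A hA
    _ = c * d * ρ A + (c * ξ + η) := by ring

/-- Layer cake: `∫ f = ∫₀¹ μ {t < f} dt` for `f ≤ 1`, so the bound on level sets integrates. -/
lemma lintegral_le (h : MaxDivLE μ ν c η) {f : α → ℝ≥0∞} (hf : Measurable f)
    (hf1 : ∀ a, f a ≤ 1) : ∫⁻ a, f a ∂μ ≤ c * ∫⁻ a, f a ∂ν + η := by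
  set g : α → ℝ := fun a => (f a).toReal
  have hg1 : ∀ a, g a ≤ 1 := fun a =>
    ENNReal.toReal_le_of_le_ofReal zero_le_one (by simpa using hf1 a)
  have hlayer : ∀ ρ : Measure α, ∫⁻ a, f a ∂ρ = ∫⁻ t in Ioc 0 1, ρ {a | t < g a} := fun ρ => by
    rw [← setLIntegral_Ioi_zero_meas_lt_eq_Ioc ρ hg1, ← lintegral_eq_lintegral_meas_lt ρ
      (Filter.Eventually.of_forall fun a => ENNReal.toReal_nonneg) hf.ennreal_toReal.aemeasurable]
    exact lintegral_congr fun a =>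
      (ENNReal.ofReal_toReal ((hf1 a).trans_lt ENNReal.one_lt_top).ne).symm
  have hlevel : ∀ t : ℝ, MeasurableSet {a | t < g a} := fun t =>
    measurableSet_lt measurable_const hf.ennreal_toReal
  have hlevel_measurable : Measurable fun t : ℝ => ν {a | t < g a} :=
    Antitone.measurable fun s t hst => measure_mono fun a ha => lt_of_le_of_lt hst ha
  rw [hlayer μ, hlayer ν]
  calc ∫⁻ t in Ioc 0 1, μ {a | t < g a}
      ≤ ∫⁻ t in Ioc 0 1, (c * ν {a | t < g a} + η) := lintegral_mono fun t => h _ (hlevel t)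
    _ = c * (∫⁻ t in Ioc 0 1, ν {a | t < g a}) + η := by
        rw [lintegral_add_right _ measurable_const, lintegral_const_mul _ hlevel_measurable]
        simp

lemma bind (h : MaxDivLE μ ν c η) (κ : Kernel α β) [IsMarkovKernel κ] :
    MaxDivLE (μ.bind κ) (ν.bind κ) c η := fun S hS => by
  simp only [Measure.bind_apply hS κ.aemeasurable]
  exact h.lintegral_le (κ.measurable_coe hS) fun a => prob_le_one

end MaxDivLE

end MeasureTheory.Measure

open MeasureTheory.Measure in
theorem privacy_under_maxdiv_approximations_general
    {Ω : Type*} [MeasurableSpace Ω] (m : ℕ)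
    (κ : Kernel (Fin m → ℝ) Ω) [IsMarkovKernel κ]
    (ε δ lam η : ℝ) (hδ : 0 ≤ δ) (hη : 0 ≤ η)
    (fi fj fti ftj : Measure (Fin m → ℝ))
    (h1 : ∀ S : Set Ω, MeasurableSet S →
      (fti.bind fun t => κ t) S
        ≤ ENNReal.ofReal (Real.exp ε) * (ftj.bind fun t => κ t) S
          + ENNReal.ofReal δ)
    (h2i : ∀ A : Set (Fin m → ℝ), MeasurableSet A →
      fi A ≤ ENNReal.ofReal (Real.exp lam) * fti A + ENNReal.ofReal η ∧
      fti A ≤ ENNReal.ofReal (Real.exp lam) * fi A + ENNReal.ofReal η)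
    (h2j : ∀ A : Set (Fin m → ℝ), MeasurableSet A →
      fj A ≤ ENNReal.ofReal (Real.exp lam) * ftj A + ENNReal.ofReal η ∧
      ftj A ≤ ENNReal.ofReal (Real.exp lam) * fj A + ENNReal.ofReal η) :
    ∀ S : Set Ω, MeasurableSet S →
      (fi.bind fun t => κ t) S
        ≤ ENNReal.ofReal (Real.exp (ε + 2 * lam)) * (fj.bind fun t => κ t) S
          + ENNReal.ofReal ((1 + Real.exp (ε + lam)) * η + Real.exp lam * δ) := by
  have hi : MaxDivLE (fi.bind κ) (fti.bind κ) _ _ := MaxDivLE.bind (fun A hA => (h2i A hA).1) κ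
  have hj : MaxDivLE (ftj.bind κ) (fj.bind κ) _ _ := MaxDivLE.bind (fun A hA => (h2j A hA).2) κ
  refine ((hi.trans h1).trans hj).mono (le_of_eq ?_) (le_of_eq ?_)
  · rw [show ε + 2 * lam = lam + ε + lam by ring, Real.exp_add, Real.exp_add,
      ENNReal.ofReal_mul (by positivity), ENNReal.ofReal_mul (by positivity)]
  · rw [show (1 + Real.exp (ε + lam)) * η + Real.exp lam * δ
          = Real.exp lam * Real.exp ε * η + (Real.exp lam * δ + η) by rw [Real.exp_add]; ring,
      ENNReal.ofReal_add (by positivity) (by positivity), ENNReal.ofReal_add (by positivity) hη,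
      ENNReal.ofReal_mul (by positivity), ENNReal.ofReal_mul (by positivity),
      ENNReal.ofReal_mul (by positivity)]

/-- **Privacy under approximations with max-divergence** (Theorem 4.6): if the
mechanism (a Markov kernel `κ`) is `(ε, δ)`-private for the approximating
distributions `f̃ᵢ, f̃ⱼ`, and the `η`-approximate max-divergences between each true
distribution `f_θ` and its approximation `f̃_θ` are at most `λ` in both directions,
then the mechanism is `(ε + 2λ, (1 + e^{ε+λ})η + e^λ δ)`-private for the true
distributions `fᵢ, fⱼ`. -/
theorem privacy_under_maxdiv_approximations
    {Ω : Type*} [MeasurableSpace Ω] (m : ℕ) (hm : 1 ≤ m)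
    (κ : Kernel (Fin m → ℝ) Ω) [IsMarkovKernel κ]
    (ε δ lam η : ℝ) (hε : 0 ≤ ε) (hδ : 0 ≤ δ) (hlam : 0 ≤ lam) (hη : 0 ≤ η)
    (fi fj fti ftj : Measure (Fin m → ℝ))
    (hfi : IsProbabilityMeasure fi) (hfj : IsProbabilityMeasure fj)
    (hfti : IsProbabilityMeasure fti) (hftj : IsProbabilityMeasure ftj)
    (h1 : ∀ S : Set Ω, MeasurableSet S →
      (fti.bind fun t => κ t) S
        ≤ ENNReal.ofReal (Real.exp ε) * (ftj.bind fun t => κ t) S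
          + ENNReal.ofReal δ)
    (h2i : ∀ A : Set (Fin m → ℝ), MeasurableSet A →
      fi A ≤ ENNReal.ofReal (Real.exp lam) * fti A + ENNReal.ofReal η ∧
      fti A ≤ ENNReal.ofReal (Real.exp lam) * fi A + ENNReal.ofReal η)
    (h2j : ∀ A : Set (Fin m → ℝ), MeasurableSet A →
      fj A ≤ ENNReal.ofReal (Real.exp lam) * ftj A + ENNReal.ofReal η ∧
      ftj A ≤ ENNReal.ofReal (Real.exp lam) * fj A + ENNReal.ofReal η) :
    ∀ S : Set Ω, MeasurableSet S →
      (fi.bind fun t => κ t) S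
        ≤ ENNReal.ofReal (Real.exp (ε + 2 * lam)) * (fj.bind fun t => κ t) S
          + ENNReal.ofReal ((1 + Real.exp (ε + lam)) * η + Real.exp lam * δ) :=
  privacy_under_maxdiv_approximations_general m κ ε δ lam η hδ hη fi fj fti ftj h1 h2i h2j
end
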